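/- arXiv:2507.10554 — 5 statements merged into one kernel-verified Lean document; each statement's English description precedes it below -/
import Mathlib

section
/- Let n ≥ 5. Every Lie bracket [-,-] on μ₀ⁿ making (μ₀ⁿ, ·, [-,-]) a transposed 0-Poisson algebra yields an algebra isomorphic to one of the following: TP₀(1,0,…,0); TP₀(0,1,0,…,0); TP₀(0,0,α,0,…,0) for some α ∈ ℂ; or TP₀(0,…,0,1ₛ,0,…,0) (with the single nonzero entry 1 in position s) for some 4 ≤ s ≤ n. -/
open Finset

/-- The null-filiform associative multiplication on `ℂⁿ = Fin n → ℂ`.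
The basis vector `e_i` (1-based) corresponds to the coordinate `i - 1`, and
`e_i · e_j = e_{i+j}` if `i + j ≤ n`, and `0` otherwise. -/
noncomputable def nfMul (n : ℕ) (x y : Fin n → ℂ) : Fin n → ℂ :=
  fun k => ∑ i : Fin n, ∑ j : Fin n,
    if (i : ℕ) + (j : ℕ) + 1 = (k : ℕ) then x i * y j else 0

/-- The 1-based basis vector `e i` of `ℂⁿ` (zero if `i` is out of range `1,…,n`). -/
noncomputable def nfE (n : ℕ) (i : ℕ) : Fin n → ℂ :=
  fun k => if (k : ℕ) + 1 = i then 1 else 0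

/-- The coefficient of the basis vector `e i` (1-based) in `x`. -/
noncomputable def nfCoeff (n : ℕ) (x : Fin n → ℂ) (i : ℕ) : ℂ :=
  ∑ k : Fin n, if (k : ℕ) + 1 = i then x k else 0

/-- A Lie bracket (bilinear, alternating, satisfying the Jacobi identity)
on a complex vector space. -/
structure LieBracketOn (L : Type*) [AddCommGroup L] [Module ℂ L] where
  br : L → L → L
  add_left : ∀ x y z, br (x + y) z = br x z + br y z
  smul_left : ∀ (c : ℂ) (x y : L), br (c • x) y = c • br x y
  add_right : ∀ x y z, br x (y + z) = br x y + br x z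
  smul_right : ∀ (c : ℂ) (x y : L), br x (c • y) = c • br x y
  alt : ∀ x, br x x = 0
  jacobi : ∀ x y z, br (br x y) z + br (br y z) x + br (br z x) y = 0

/-- `(μ₀ⁿ, ·, [-,-])` is a transposed `δ`-Poisson algebra:
`δ • (z · [x,y]) = [z·x, y] + [x, z·y]`. -/
noncomputable def IsTransposedPoisson (n : ℕ) (δ : ℂ) (B : LieBracketOn (Fin n → ℂ)) : Prop :=
  ∀ x y z, δ • nfMul n z (B.br x y) = B.br (nfMul n z x) y + B.br x (nfMul n z y)

/-- `(μ₀ⁿ, ·, [-,-])` is a `δ`-Poisson algebra: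
`[x, y·z] = δ • ([x,y]·z + y·[x,z])`. -/
noncomputable def IsDeltaPoisson (n : ℕ) (δ : ℂ) (B : LieBracketOn (Fin n → ℂ)) : Prop :=
  ∀ x y z, B.br x (nfMul n y z) = δ • (nfMul n (B.br x y) z + nfMul n y (B.br x z))

/-- The bracket of the transposed 0-Poisson algebra `TP₀(α₁,…,αₙ)` on `μ₀ⁿ`:
determined by `[e₁,e₂] = ∑_{t=1}^n αₜ eₜ` and `[eᵢ,eⱼ] = 0` for all other
pairs `i < j`. -/
noncomputable def brTP0 (n : ℕ) (α : ℕ → ℂ) (x y : Fin n → ℂ) : Fin n → ℂ :=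
  (nfCoeff n x 1 * nfCoeff n y 2 - nfCoeff n x 2 * nfCoeff n y 1) •
    ∑ t ∈ Finset.Icc 1 n, α t • nfE n t

/-- The bracket of the transposed 1-Poisson algebra `TP₁(α₂,…,αₙ)` on `μ₀ⁿ`:
determined by `[e₁,eᵢ] = ∑_{t=i}^n α_{t-i+2} eₜ` for `2 ≤ i ≤ n` and
`[eᵢ,eⱼ] = 0` for `2 ≤ i < j ≤ n`. -/
noncomputable def brTP1 (n : ℕ) (α : ℕ → ℂ) (x y : Fin n → ℂ) : Fin n → ℂ :=
  ∑ i ∈ Finset.Icc 2 n,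
    (nfCoeff n x 1 * nfCoeff n y i - nfCoeff n x i * nfCoeff n y 1) •
      ∑ t ∈ Finset.Icc i n, α (t + 2 - i) • nfE n t

/-- The bracket of the transposed `δ`-Poisson algebra `TP_δ(a, b, c)`
(`a = α_{n-2}`, `b = α_{n-1}`, `c = αₙ`) on `μ₀ⁿ`: determined by
`[e₁,e₂] = a e_{n-2} + b e_{n-1} + c eₙ`, `[e₁,e₃] = δ(a e_{n-1} + b eₙ)`,
`[e₂,e₃] = ((δ²-δ)/2) a eₙ`, `[e₁,e₄] = ((δ²+δ)/2) a eₙ`, and `[eᵢ,eⱼ] = 0`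
for all other pairs `i < j`. -/
noncomputable def brTPd (n : ℕ) (δ a b c : ℂ) (x y : Fin n → ℂ) : Fin n → ℂ :=
  (nfCoeff n x 1 * nfCoeff n y 2 - nfCoeff n x 2 * nfCoeff n y 1) •
      (a • nfE n (n-2) + b • nfE n (n-1) + c • nfE n n)
  + (nfCoeff n x 1 * nfCoeff n y 3 - nfCoeff n x 3 * nfCoeff n y 1) •
      (δ • (a • nfE n (n-1) + b • nfE n n))
  + (nfCoeff n x 2 * nfCoeff n y 3 - nfCoeff n x 3 * nfCoeff n y 2) •
      (((δ^2 - δ)/2 * a) • nfE n n)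
  + (nfCoeff n x 1 * nfCoeff n y 4 - nfCoeff n x 4 * nfCoeff n y 1) •
      (((δ^2 + δ)/2 * a) • nfE n n)

/-- Two bracket structures on `μ₀ⁿ` are isomorphic (as transposed δ-Poisson
algebras): there is a linear bijection preserving both `·` and `[-,-]`. -/
noncomputable def TPIso (n : ℕ) (B B' : (Fin n → ℂ) → (Fin n → ℂ) → (Fin n → ℂ)) : Prop :=
  ∃ φ : (Fin n → ℂ) ≃ₗ[ℂ] (Fin n → ℂ),
    (∀ x y, φ (nfMul n x y) = nfMul n (φ x) (φ y)) ∧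
    ∀ x y, φ (B x y) = B' (φ x) (φ y)

namespace Stmt11Aux

open PowerSeries

lemma nfE_apply {n : ℕ} (i : ℕ) (k : Fin n) : nfE n i k = if (k:ℕ) + 1 = i then 1 else 0 := rfl

lemma nfE_eq_zero {n i : ℕ} (h : n < i) : nfE n i = 0 := by
  funext k
  simp only [nfE, Pi.zero_apply]
  rw [if_neg]
  have := k.isLt; omega

lemma nfCoeff_apply {n : ℕ} (x : Fin n → ℂ) (k : Fin n) : nfCoeff n x ((k:ℕ)+1) = x k := by
  unfold nfCoeff
  rw [Finset.sum_eq_single k]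
  · rw [if_pos rfl]
  · intro b _ hb
    rw [if_neg]
    intro h
    exact hb (Fin.ext (by omega))
  · intro h; exact absurd (Finset.mem_univ k) h

lemma nfCoeff_zero' {n : ℕ} (x : Fin n → ℂ) : nfCoeff n x 0 = 0 := by
  unfold nfCoeff
  apply Finset.sum_eq_zero
  intro k _
  rw [if_neg]; omega

lemma nfCoeff_of_gt {n : ℕ} (x : Fin n → ℂ) {d : ℕ} (h : n < d) : nfCoeff n x d = 0 := by
  unfold nfCoeff
  apply Finset.sum_eq_zero
  intro k _
  rw [if_neg]
  have := k.isLt; omega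

lemma nfCoeff_eq {n : ℕ} (x : Fin n → ℂ) {d : ℕ} (h1 : 1 ≤ d) (h2 : d ≤ n) :
    nfCoeff n x d = x ⟨d-1, by omega⟩ := by
  unfold nfCoeff
  rw [Finset.sum_eq_single (⟨d-1, by omega⟩ : Fin n)]
  · rw [if_pos (by simp only [Fin.val_mk]; omega)]
  · intro b _ hb
    rw [if_neg]
    intro h
    exact hb (Fin.ext (by simp only [Fin.val_mk]; omega))
  · intro h; exact absurd (Finset.mem_univ _) h

/-! ### Power series bridge -/

noncomputable def toPS (n : ℕ) (x : Fin n → ℂ) : PowerSeries ℂ :=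
  PowerSeries.mk fun d => nfCoeff n x d

@[simp] lemma coeff_toPS {n : ℕ} (x : Fin n → ℂ) (d : ℕ) :
    coeff (R := ℂ) d (toPS n x) = nfCoeff n x d := coeff_mk d _

lemma coeff_zero_toPS {n : ℕ} (x : Fin n → ℂ) : coeff (R := ℂ) 0 (toPS n x) = 0 := by
  rw [coeff_toPS, nfCoeff_zero']

noncomputable def ofPS (n : ℕ) (f : PowerSeries ℂ) : Fin n → ℂ :=
  fun k => coeff (R := ℂ) ((k:ℕ)+1) f

lemma ofPS_toPS {n : ℕ} (x : Fin n → ℂ) : ofPS n (toPS n x) = x := by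
  funext k
  unfold ofPS
  rw [coeff_toPS, nfCoeff_apply]

lemma coeff_one_toPS {n : ℕ} (h : 0 < n) (u : Fin n → ℂ) :
    coeff (R := ℂ) 1 (toPS n u) = u ⟨0, h⟩ := by
  rw [coeff_toPS, nfCoeff_eq u le_rfl h]

lemma nfMul_eq {n : ℕ} (x y : Fin n → ℂ) : nfMul n x y = ofPS n (toPS n x * toPS n y) := by
  funext k
  unfold nfMul ofPS
  rw [coeff_mul]
  simp only [coeff_toPS]
  unfold nfCoeff
  symm
  calc ∑ p ∈ Finset.HasAntidiagonal.antidiagonal ((k:ℕ)+1),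
        (∑ a : Fin n, if (a:ℕ)+1 = p.1 then x a else 0) * (∑ b : Fin n, if (b:ℕ)+1 = p.2 then y b else 0)
      = ∑ p ∈ Finset.HasAntidiagonal.antidiagonal ((k:ℕ)+1), ∑ a : Fin n, ∑ b : Fin n,
          (if (a:ℕ)+1 = p.1 then x a else 0) * (if (b:ℕ)+1 = p.2 then y b else 0) := by
        refine Finset.sum_congr rfl fun p _ => ?_
        rw [Finset.sum_mul_sum]
    _ = ∑ a : Fin n, ∑ b : Fin n, ∑ p ∈ Finset.HasAntidiagonal.antidiagonal ((k:ℕ)+1),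
          (if (a:ℕ)+1 = p.1 then x a else 0) * (if (b:ℕ)+1 = p.2 then y b else 0) := by
        rw [Finset.sum_comm]
        refine Finset.sum_congr rfl fun a _ => ?_
        rw [Finset.sum_comm]
    _ = ∑ a : Fin n, ∑ b : Fin n,
          (if ((a:ℕ)+1) + ((b:ℕ)+1) = (k:ℕ)+1 then x a * y b else 0) := by
        refine Finset.sum_congr rfl fun a _ => Finset.sum_congr rfl fun b _ => ?_
        have hterm : ∀ p : ℕ × ℕ,
            (if (a:ℕ)+1 = p.1 then x a else 0) * (if (b:ℕ)+1 = p.2 then y b else 0)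
            = if p = ((a:ℕ)+1, (b:ℕ)+1) then x a * y b else 0 := by
          intro p
          by_cases h1 : (a:ℕ)+1 = p.1
          · by_cases h2 : (b:ℕ)+1 = p.2
            · rw [if_pos h1, if_pos h2, if_pos (Prod.ext_iff.2 ⟨h1.symm, h2.symm⟩)]
            · rw [if_neg h2, mul_zero, if_neg]
              intro hc; subst hc; exact h2 rfl
          · rw [if_neg h1, zero_mul, if_neg]
            intro hc; subst hc; exact h1 rfl
        simp only [hterm]
        rw [Finset.sum_ite_eq' (Finset.HasAntidiagonal.antidiagonal ((k:ℕ)+1)) (((a:ℕ)+1, (b:ℕ)+1))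
          (fun _ => x a * y b)]
        simp only [Finset.HasAntidiagonal.mem_antidiagonal]
    _ = ∑ a : Fin n, ∑ b : Fin n, (if (a:ℕ) + (b:ℕ) + 1 = (k:ℕ) then x a * y b else 0) := by
        refine Finset.sum_congr rfl fun a _ => Finset.sum_congr rfl fun b _ => ?_
        by_cases h : (a:ℕ) + (b:ℕ) + 1 = (k:ℕ)
        · rw [if_pos (by omega), if_pos h]
        · rw [if_neg (by omega), if_neg h]

lemma ofPS_mul_congr {n : ℕ} {f f' g g' : PowerSeries ℂ}
    (hf : ∀ d, d ≤ n → coeff (R := ℂ) d f = coeff (R := ℂ) d f')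
    (hg : ∀ d, d ≤ n → coeff (R := ℂ) d g = coeff (R := ℂ) d g') :
    ofPS n (f * g) = ofPS n (f' * g') := by
  funext k
  unfold ofPS
  rw [coeff_mul, coeff_mul]
  refine Finset.sum_congr rfl fun p hp => ?_
  rw [Finset.HasAntidiagonal.mem_antidiagonal] at hp
  have hk := k.isLt
  rw [hf p.1 (by omega), hg p.2 (by omega)]

lemma coeff_toPS_ofPS {n : ℕ} (f : PowerSeries ℂ) (hf : coeff (R := ℂ) 0 f = 0) {d : ℕ} (hd : d ≤ n) :
    coeff (R := ℂ) d (toPS n (ofPS n f)) = coeff (R := ℂ) d f := by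
  rw [coeff_toPS]
  rcases Nat.eq_zero_or_pos d with h | h
  · subst h; rw [nfCoeff_zero', hf]
  · rw [nfCoeff_eq _ h hd]
    unfold ofPS
    show coeff (R := ℂ) ((d-1)+1) f = coeff (R := ℂ) d f
    rw [show (d-1)+1 = d by omega]

lemma nfMul_ofPS {n : ℕ} (f g : PowerSeries ℂ) (hf : coeff (R := ℂ) 0 f = 0) (hg : coeff (R := ℂ) 0 g = 0) :
    nfMul n (ofPS n f) (ofPS n g) = ofPS n (f * g) := by
  rw [nfMul_eq]
  exact ofPS_mul_congr (fun d hd => coeff_toPS_ofPS f hf hd) (fun d hd => coeff_toPS_ofPS g hg hd)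

lemma coeff_pow_eq_zero {f : PowerSeries ℂ} (hf : coeff (R := ℂ) 0 f = 0) {d m : ℕ} (h : d < m) :
    coeff (R := ℂ) d (f ^ m) = 0 := by
  induction m generalizing d with
  | zero => exact absurd h (Nat.not_lt_zero d)
  | succ m ih =>
    rw [pow_succ, coeff_mul]
    apply Finset.sum_eq_zero
    intro p hp
    rw [Finset.HasAntidiagonal.mem_antidiagonal] at hp
    by_cases h1 : p.1 < m
    · rw [ih h1, zero_mul]
    · have h2 : p.2 = 0 := by omega
      rw [h2, hf, mul_zero]

lemma coeff_pow_self {f : PowerSeries ℂ} (hf : coeff (R := ℂ) 0 f = 0) (m : ℕ) :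
    coeff (R := ℂ) m (f ^ m) = (coeff (R := ℂ) 1 f) ^ m := by
  induction m with
  | zero => simp
  | succ m ih =>
    rw [pow_succ, coeff_mul, Finset.sum_eq_single (m, 1)]
    · rw [ih, pow_succ]
    · intro p hp hne
      rw [Finset.HasAntidiagonal.mem_antidiagonal] at hp
      rcases Nat.lt_or_ge p.1 m with h1 | h1
      · rw [coeff_pow_eq_zero hf h1, zero_mul]
      · rcases Nat.eq_or_lt_of_le h1 with h | h
        · exact absurd (Prod.ext_iff.2 ⟨h.symm, by omega⟩) hne
        · have h2 : p.2 = 0 := by omega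
          rw [h2, hf, mul_zero]
    · intro h
      exact absurd ((Finset.HasAntidiagonal.mem_antidiagonal (n := m+1) (a := (m,1))).2 rfl) h

lemma coeff_X_pow_mul_eq (f : PowerSeries ℂ) (t d : ℕ) :
    coeff (R := ℂ) d ((X:PowerSeries ℂ)^t * f) = if t ≤ d then coeff (R := ℂ) (d - t) f else 0 := by
  by_cases h : t ≤ d
  · rw [if_pos h]
    conv_lhs => rw [show d = (d - t) + t by omega]
    rw [coeff_X_pow_mul]
  · rw [if_neg h, coeff_mul]
    apply Finset.sum_eq_zero
    intro p hp
    rw [Finset.HasAntidiagonal.mem_antidiagonal] at hp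
    rw [coeff_X_pow, if_neg (by omega), zero_mul]

/-! ### Linearity of nfCoeff / toPS / nfMul -/

lemma nfCoeff_add {n : ℕ} (x y : Fin n → ℂ) (d : ℕ) :
    nfCoeff n (x + y) d = nfCoeff n x d + nfCoeff n y d := by
  unfold nfCoeff
  rw [← Finset.sum_add_distrib]
  refine Finset.sum_congr rfl fun k _ => ?_
  by_cases h : (k:ℕ)+1 = d <;> simp [h]

lemma nfCoeff_smul {n : ℕ} (c : ℂ) (x : Fin n → ℂ) (d : ℕ) :
    nfCoeff n (c • x) d = c * nfCoeff n x d := by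
  unfold nfCoeff
  rw [Finset.mul_sum]
  refine Finset.sum_congr rfl fun k _ => ?_
  by_cases h : (k:ℕ)+1 = d <;> simp [h]

lemma toPS_add {n : ℕ} (x y : Fin n → ℂ) : toPS n (x + y) = toPS n x + toPS n y := by
  ext d
  rw [map_add, coeff_toPS, coeff_toPS, coeff_toPS, nfCoeff_add]

lemma toPS_smul {n : ℕ} (c : ℂ) (x : Fin n → ℂ) : toPS n (c • x) = c • toPS n x := by
  ext d
  rw [coeff_smul, coeff_toPS, coeff_toPS, nfCoeff_smul, smul_eq_mul]

lemma toPS_nfE {n : ℕ} {m : ℕ} (h1 : 1 ≤ m) (h2 : m ≤ n) :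
    toPS n (nfE n m) = (X : PowerSeries ℂ)^m := by
  ext d
  rw [coeff_toPS, coeff_X_pow]
  by_cases h : d = m
  · subst h
    rw [nfCoeff_eq _ h1 h2, if_pos rfl, nfE_apply, if_pos (by simp only [Fin.val_mk]; omega)]
  · rw [if_neg h]
    rcases Nat.eq_zero_or_pos d with h0 | h0
    · subst h0; exact nfCoeff_zero' _
    · by_cases hd : d ≤ n
      · rw [nfCoeff_eq _ h0 hd, nfE_apply, if_neg (by simp only [Fin.val_mk]; omega)]
      · exact nfCoeff_of_gt _ (by omega)

lemma ofPS_X_pow {n : ℕ} (m : ℕ) : ofPS n ((X : PowerSeries ℂ)^m) = nfE n m := by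
  funext k
  unfold ofPS
  rw [coeff_X_pow, nfE_apply]

lemma toPS_zero {n : ℕ} : toPS n (0 : Fin n → ℂ) = 0 := by
  ext d
  rw [coeff_toPS]
  simp only [map_zero]
  unfold nfCoeff
  apply Finset.sum_eq_zero
  intro k _
  split <;> rfl

lemma nfMul_zero_left {n : ℕ} (y : Fin n → ℂ) : nfMul n 0 y = 0 := by
  rw [nfMul_eq, toPS_zero, zero_mul]
  funext k; rfl

lemma mulE {n : ℕ} {i j : ℕ} (hi : 1 ≤ i) (hj : 1 ≤ j) :
    nfMul n (nfE n i) (nfE n j) = nfE n (i + j) := by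
  by_cases hin : i ≤ n
  · by_cases hjn : j ≤ n
    · rw [nfMul_eq, toPS_nfE hi hin, toPS_nfE hj hjn, ← pow_add, ofPS_X_pow]
    · rw [nfE_eq_zero (show n < j by omega), nfE_eq_zero (show n < i + j by omega)]
      rw [nfMul_eq, toPS_zero, mul_zero]
      funext k; rfl
  · rw [nfE_eq_zero (show n < i by omega), nfE_eq_zero (show n < i + j by omega), nfMul_zero_left]

lemma nfMul_sum_left {n : ℕ} {ι : Type*} (s : Finset ι) (f : ι → Fin n → ℂ) (y : Fin n → ℂ) :
    nfMul n (∑ i ∈ s, f i) y = ∑ i ∈ s, nfMul n (f i) y := by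
  classical
  induction s using Finset.induction with
  | empty => simpa using nfMul_zero_left y
  | insert _ _ h ih =>
    rw [Finset.sum_insert h, Finset.sum_insert h, ← ih]
    rw [nfMul_eq, nfMul_eq, nfMul_eq, toPS_add, add_mul]
    funext k
    unfold ofPS
    rw [map_add]
    rfl

lemma nfMul_comm {n : ℕ} (x y : Fin n → ℂ) : nfMul n x y = nfMul n y x := by
  rw [nfMul_eq, nfMul_eq, mul_comm]

lemma nfMul_smul_left {n : ℕ} (c : ℂ) (x y : Fin n → ℂ) :
    nfMul n (c • x) y = c • nfMul n x y := by
  rw [nfMul_eq, nfMul_eq, toPS_smul, smul_mul_assoc]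
  funext k
  unfold ofPS
  rw [coeff_smul]
  rfl

lemma basis_expand {n : ℕ} (x : Fin n → ℂ) : x = ∑ i : Fin n, x i • nfE n ((i:ℕ)+1) := by
  funext k
  rw [Finset.sum_apply]
  rw [Finset.sum_eq_single k]
  · rw [Pi.smul_apply, nfE_apply, if_pos rfl, smul_eq_mul, mul_one]
  · intro b _ hb
    rw [Pi.smul_apply, nfE_apply, if_neg, smul_eq_mul, mul_zero]
    intro h
    exact hb (Fin.ext (by omega))
  · intro h; exact absurd (Finset.mem_univ k) h

/-! ### The substitution automorphism -/

noncomputable def phiFun (n : ℕ) (u : Fin n → ℂ) (x : Fin n → ℂ) : Fin n → ℂ :=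
  fun k => ∑ i : Fin n, x i * coeff (R := ℂ) ((k:ℕ)+1) ((toPS n u) ^ ((i:ℕ)+1))

noncomputable def phiLM (n : ℕ) (u : Fin n → ℂ) : (Fin n → ℂ) →ₗ[ℂ] (Fin n → ℂ) where
  toFun := phiFun n u
  map_add' x y := by
    funext k
    simp only [phiFun, Pi.add_apply, add_mul, Finset.sum_add_distrib]
  map_smul' c x := by
    funext k
    simp only [phiFun, Pi.smul_apply, smul_eq_mul, RingHom.id_apply, Finset.mul_sum, mul_assoc]

lemma phiFun_nfE {n : ℕ} (u : Fin n → ℂ) {m : ℕ} (h1 : 1 ≤ m) :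
    phiFun n u (nfE n m) = ofPS n ((toPS n u) ^ m) := by
  funext k
  unfold phiFun ofPS
  by_cases hm : m ≤ n
  · rw [Finset.sum_eq_single (⟨m-1, by omega⟩ : Fin n)]
    · rw [nfE_apply, if_pos (by simp only [Fin.val_mk]; omega), one_mul]
      congr 2
      simp only [Fin.val_mk]
      omega
    · intro b _ hb
      rw [nfE_apply, if_neg, zero_mul]
      intro hc
      exact hb (Fin.ext (by simp only [Fin.val_mk]; omega))
    · intro h; exact absurd (Finset.mem_univ _) h
  · rw [Finset.sum_eq_zero, coeff_pow_eq_zero (coeff_zero_toPS u) (show (k:ℕ)+1 < m by have := k.isLt; omega)]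
    intro i _
    rw [nfE_apply, if_neg (by have := i.isLt; omega), zero_mul]

lemma phiFun_zero {n : ℕ} (u : Fin n → ℂ) : phiFun n u 0 = 0 := by
  funext k
  unfold phiFun
  apply Finset.sum_eq_zero
  intro i _
  rw [Pi.zero_apply, zero_mul]

lemma phiFun_sum {n : ℕ} (u : Fin n → ℂ) {ι : Type*} (s : Finset ι) (f : ι → Fin n → ℂ) :
    phiFun n u (∑ i ∈ s, f i) = ∑ i ∈ s, phiFun n u (f i) := by
  classical
  induction s using Finset.induction with
  | empty => simpa using phiFun_zero u
  | insert _ _ h ih =>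
    rw [Finset.sum_insert h, Finset.sum_insert h, ← ih]
    exact (phiLM n u).map_add _ _

lemma phiFun_smul {n : ℕ} (u : Fin n → ℂ) (c : ℂ) (x : Fin n → ℂ) :
    phiFun n u (c • x) = c • phiFun n u x :=
  (phiLM n u).map_smul c x

lemma phiFun_mul_basis {n : ℕ} (u : Fin n → ℂ) {i j : ℕ} (hi : 1 ≤ i) (hj : 1 ≤ j) :
    phiFun n u (nfMul n (nfE n i) (nfE n j))
      = nfMul n (phiFun n u (nfE n i)) (phiFun n u (nfE n j)) := by
  rw [mulE hi hj, phiFun_nfE u (show 1 ≤ i + j by omega), phiFun_nfE u hi, phiFun_nfE u hj]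
  rw [nfMul_ofPS _ _ (coeff_pow_eq_zero (coeff_zero_toPS u) hi) (coeff_pow_eq_zero (coeff_zero_toPS u) hj)]
  rw [← pow_add]

lemma nfMul_sum_right {n : ℕ} {ι : Type*} (s : Finset ι) (x : Fin n → ℂ) (f : ι → Fin n → ℂ) :
    nfMul n x (∑ i ∈ s, f i) = ∑ i ∈ s, nfMul n x (f i) := by
  rw [nfMul_comm, nfMul_sum_left]
  exact Finset.sum_congr rfl fun i _ => nfMul_comm _ _

lemma nfMul_smul_right {n : ℕ} (c : ℂ) (x y : Fin n → ℂ) :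
    nfMul n x (c • y) = c • nfMul n x y := by
  rw [nfMul_comm, nfMul_smul_left, nfMul_comm]

lemma phiFun_mul {n : ℕ} (u : Fin n → ℂ) (x y : Fin n → ℂ) :
    phiFun n u (nfMul n x y) = nfMul n (phiFun n u x) (phiFun n u y) := by
  conv_lhs => rw [basis_expand x, basis_expand y]
  conv_rhs => rw [basis_expand x, basis_expand y]
  rw [nfMul_sum_left, phiFun_sum, phiFun_sum, nfMul_sum_left]
  refine Finset.sum_congr rfl fun i _ => ?_
  rw [nfMul_sum_right, phiFun_sum, phiFun_sum, nfMul_sum_right]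
  refine Finset.sum_congr rfl fun j _ => ?_
  simp only [nfMul_smul_left, nfMul_smul_right, phiFun_smul]
  rw [phiFun_mul_basis u (by omega) (by omega)]

lemma phiLM_bijective {n : ℕ} (h0 : 0 < n) (u : Fin n → ℂ) (hu : u ⟨0, h0⟩ ≠ 0) :
    Function.Bijective (phiLM n u) := by
  have hinj : Function.Injective (phiLM n u) := by
    rw [injective_iff_map_eq_zero]
    intro x hx
    by_contra hx0
    have hex : ∃ m : ℕ, ∃ h : m < n, x ⟨m, h⟩ ≠ 0 := by
      by_contra hc
      push_neg at hc
      apply hx0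
      funext k
      have := hc (k:ℕ) k.isLt
      simpa using this
    classical
    set m := Nat.find hex with hm
    obtain ⟨hmn, hxm⟩ := Nat.find_spec hex
    have hco : phiFun n u x ⟨m, hmn⟩ = x ⟨m, hmn⟩ * (u ⟨0, h0⟩)^(m+1) := by
      unfold phiFun
      rw [Finset.sum_eq_single (⟨m, hmn⟩ : Fin n)]
      · congr 1
        rw [show ((⟨m, hmn⟩ : Fin n) : ℕ) + 1 = m + 1 from rfl]
        rw [coeff_pow_self (coeff_zero_toPS u), coeff_one_toPS h0]
      · intro b _ hb
        have hbm : (b:ℕ) ≠ m := fun hc => hb (Fin.ext (by simp [hc]))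
        rcases Nat.lt_or_ge (b:ℕ) m with h | h
        · have := Nat.find_min hex h
          push_neg at this
          have hb0 : x b = 0 := by
            have := this b.isLt
            simpa using this
          rw [hb0, zero_mul]
        · have hgt : (m:ℕ) + 1 < (b:ℕ) + 1 := by omega
          rw [coeff_pow_eq_zero (coeff_zero_toPS u) hgt, mul_zero]
      · intro h; exact absurd (Finset.mem_univ _) h
    have : phiFun n u x ⟨m, hmn⟩ = 0 := by
      have : phiLM n u x = 0 := hx
      rw [show phiLM n u x = phiFun n u x from rfl] at this
      rw [this]; rfl
    rw [hco] at this
    exact (mul_ne_zero hxm (pow_ne_zero _ hu)) this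
  exact ⟨hinj, LinearMap.injective_iff_surjective.1 hinj⟩

lemma phiFun_coord0 {n : ℕ} (h0 : 0 < n) (u x : Fin n → ℂ) :
    phiFun n u x ⟨0, h0⟩ = x ⟨0, h0⟩ * u ⟨0, h0⟩ := by
  unfold phiFun
  rw [Finset.sum_eq_single (⟨0, h0⟩ : Fin n)]
  · congr 1
    rw [show ((⟨0, h0⟩ : Fin n) : ℕ) + 1 = 1 from rfl, pow_one, coeff_one_toPS h0]
  · intro b _ hb
    have : (0:ℕ) + 1 < (b:ℕ) + 1 := by
      have : (b:ℕ) ≠ 0 := fun hc => hb (Fin.ext (by simp [hc]))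
      omega
    rw [coeff_pow_eq_zero (coeff_zero_toPS u) this, mul_zero]
  · intro h; exact absurd (Finset.mem_univ _) h

lemma phiFun_coord1 {n : ℕ} (h1 : 1 < n) (u x : Fin n → ℂ) :
    phiFun n u x ⟨1, h1⟩ = x ⟨0, by omega⟩ * coeff (R := ℂ) 2 (toPS n u)
      + x ⟨1, h1⟩ * (u ⟨0, by omega⟩)^2 := by
  unfold phiFun
  rw [← Finset.sum_subset (Finset.subset_univ {(⟨0, by omega⟩ : Fin n), ⟨1, h1⟩})]
  · rw [Finset.sum_pair (by
      intro hc
      have := congrArg Fin.val hc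
      simp only [Fin.val_mk] at this
      omega)]
    congr 2
    · rw [show ((⟨0, by omega⟩ : Fin n) : ℕ) + 1 = 1 from rfl, pow_one]
    · rw [show ((⟨1, h1⟩ : Fin n) : ℕ) + 1 = 2 from rfl]
      rw [coeff_pow_self (coeff_zero_toPS u), coeff_one_toPS (by omega)]
  · intro b _ hb
    simp only [Finset.mem_insert, Finset.mem_singleton] at hb
    push_neg at hb
    have hb0 : (b:ℕ) ≠ 0 := fun hc => hb.1 (Fin.ext (by simp [hc]))
    have hb1 : (b:ℕ) ≠ 1 := fun hc => hb.2 (Fin.ext (by simp [hc]))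
    have : (1:ℕ) + 1 < (b:ℕ) + 1 := by omega
    rw [coeff_pow_eq_zero (coeff_zero_toPS u) this, mul_zero]

lemma root_lemma {n : ℕ} (s : ℕ) (hs1 : 1 ≤ s) (hsn : s ≤ n)
    (v : Fin n → ℂ) (hv : ∀ k : Fin n, (k:ℕ)+1 < s → v k = 0)
    (lam a : ℂ) (ha : a ≠ 0) (hμ : v ⟨s-1, by omega⟩ ≠ 0)
    (hlead : lam * a ^ s = a ^ 3 * v ⟨s-1, by omega⟩) :
    ∃ u : Fin n → ℂ, u ⟨0, by omega⟩ = a ∧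
      ∀ k : Fin n, lam * coeff (R := ℂ) ((k:ℕ)+1) ((toPS n u)^s) = a^3 * v k := by
  have h0 : 0 < n := by omega
  have hlam : lam ≠ 0 := by
    intro h
    rw [h, zero_mul] at hlead
    exact mul_ne_zero (pow_ne_zero _ ha) hμ hlead.symm
  have key : ∀ N : ℕ, ∃ u : Fin n → ℂ, u ⟨0, h0⟩ = a ∧
      ∀ k : Fin n, (k:ℕ)+1 ≤ s + N → lam * coeff (R := ℂ) ((k:ℕ)+1) ((toPS n u)^s) = a^3 * v k := by
    intro N
    induction N with
    | zero =>
      refine ⟨a • nfE n 1, by simp [nfE_apply], ?_⟩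
      intro k hk
      have hU : toPS n (a • nfE n 1) = a • (X : PowerSeries ℂ) := by
        rw [toPS_smul, toPS_nfE le_rfl (by omega), pow_one]
      rw [hU, smul_pow, coeff_smul, smul_eq_mul, coeff_X_pow]
      rcases Nat.lt_or_ge ((k:ℕ)+1) s with h | h
      · rw [if_neg (by omega), mul_zero, mul_zero, hv k h, mul_zero]
      · have hks : (k:ℕ)+1 = s := by omega
        have hkk : k = ⟨s-1, by omega⟩ := Fin.ext (by simp only [Fin.val_mk]; omega)
        rw [if_pos hks, mul_one, hkk]
        exact hlead
    | succ N ih =>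
      obtain ⟨u, hu0, hu⟩ := ih
      by_cases hbig : n < s + N + 1
      · exact ⟨u, hu0, fun k hk => hu k (by have := k.isLt; omega)⟩
      · have hsN : s + N + 1 ≤ n := by omega
        have hN2 : N + 2 ≤ n := by omega
        set U := toPS n u with hUdef
        have hU0 : coeff (R := ℂ) 0 U = 0 := coeff_zero_toPS u
        have hU1 : coeff (R := ℂ) 1 U = a := by rw [hUdef, coeff_one_toPS h0, hu0]
        have hsC : (s:ℂ) ≠ 0 := Nat.cast_ne_zero.2 (by omega)
        set c := coeff (R := ℂ) (s+N+1) (U^s) with hc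
        set d := (a^3 * v ⟨s+N, by omega⟩ - lam * c) / (lam * s * a^(s-1)) with hd
        have hT : toPS n (u + d • nfE n (N+2)) = U + d • (X : PowerSeries ℂ)^(N+2) := by
          rw [toPS_add, toPS_smul, toPS_nfE (by omega) hN2]
        have hexp : ∀ D : ℕ, D ≤ s+N+1 →
            coeff (R := ℂ) D ((U + d • (X : PowerSeries ℂ)^(N+2))^s)
            = coeff (R := ℂ) D (U^s) + (if D = s+N+1 then (s:ℂ) * a^(s-1) * d else 0) := by
          intro D hD
          rw [add_pow, map_sum]
          have hterm : ∀ j, coeff (R := ℂ) D (U ^ j * (d • (X:PowerSeries ℂ)^(N+2)) ^ (s - j)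
                * ((s.choose j : ℕ) : PowerSeries ℂ))
              = ((s.choose j : ℕ) : ℂ) * (d ^ (s-j) *
                (if (N+2)*(s-j) ≤ D then coeff (R := ℂ) (D - (N+2)*(s-j)) (U^j) else 0)) := by
            intro j
            rw [← map_natCast (C (R := ℂ)) (s.choose j), coeff_mul_C]
            rw [smul_pow, ← pow_mul, mul_comm (U^j), smul_mul_assoc, coeff_smul, smul_eq_mul]
            rw [coeff_X_pow_mul_eq]
            ring
          rw [← Finset.sum_subset (show ({s-1, s} : Finset ℕ) ⊆ Finset.range (s+1) by
            intro t ht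
            simp only [Finset.mem_insert, Finset.mem_singleton] at ht
            rcases ht with h | h <;> (subst h; simp only [Finset.mem_range]; omega))]
          · rw [Finset.sum_pair (show s - 1 ≠ s by omega)]
            rw [hterm, hterm]
            have hss : s - (s-1) = 1 := by omega
            have hchoose : s.choose (s-1) = s := by
              have h := Nat.choose_symm (show 1 ≤ s from hs1)
              rwa [Nat.choose_one_right] at h
            rw [hss]
            rw [show s - s = 0 from by omega]
            rw [pow_zero, pow_one, Nat.mul_zero, if_pos (Nat.zero_le D), Nat.sub_zero,
              Nat.choose_self, Nat.cast_one, one_mul, one_mul, hchoose]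
            by_cases hDs : D = s+N+1
            · rw [if_pos hDs]
              have hcond : (N+2)*1 ≤ D := by omega
              rw [if_pos hcond]
              rw [show D - (N+2)*1 = s - 1 from by omega]
              rw [coeff_pow_self hU0, hU1]
              ring
            · rw [if_neg hDs, add_zero]
              by_cases hcond : (N+2)*1 ≤ D
              · rw [if_pos hcond]
                have hlt : D - (N+2)*1 < s - 1 := by omega
                rw [coeff_pow_eq_zero hU0 hlt]
                ring
              · rw [if_neg hcond]
                ring
          · intro j hj hjne
            simp only [Finset.mem_insert, Finset.mem_singleton] at hjne
            push_neg at hjne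
            rw [Finset.mem_range] at hj
            rw [hterm]
            have hj2 : 2 ≤ s - j := by omega
            by_cases hcond : (N+2)*(s-j) ≤ D
            · have hPQR : (N+2)*(s-j) = (N+1)*(s-j) + (s-j) := by ring
              have hQ : 2*(N+1) ≤ (N+1)*(s-j) := by
                calc 2*(N+1) = (N+1)*2 := by ring
                _ ≤ (N+1)*(s-j) := Nat.mul_le_mul_left (N+1) hj2
              have hlt : D - (N+2)*(s-j) < j := by omega
              rw [if_pos hcond, coeff_pow_eq_zero hU0 hlt]
              ring
            · rw [if_neg hcond]
              ring
        refine ⟨u + d • nfE n (N+2), ?_, ?_⟩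
        · rw [Pi.add_apply, Pi.smul_apply, nfE_apply, if_neg (by simp only [Fin.val_mk]; omega)]
          rw [smul_eq_mul, mul_zero, add_zero, hu0]
        · intro k hk
          rw [hT, hexp ((k:ℕ)+1) hk]
          by_cases hcase : (k:ℕ)+1 = s+N+1
          · have hkk : k = ⟨s+N, by omega⟩ := Fin.ext (by simp only [Fin.val_mk]; omega)
            rw [hcase, if_pos rfl, hkk, ← hc, hd]
            have hne : lam * (s:ℂ) * a^(s-1) ≠ 0 :=
              mul_ne_zero (mul_ne_zero hlam hsC) (pow_ne_zero _ ha)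
            field_simp
            ring
          · rw [if_neg hcase, add_zero]
            exact hu k (by omega)
  obtain ⟨u, hu0, hu⟩ := key n
  exact ⟨u, hu0, fun k => hu k (by have := k.isLt; omega)⟩

lemma nfCoeff_one' {n : ℕ} (h0 : 0 < n) (x : Fin n → ℂ) : nfCoeff n x 1 = x ⟨0, h0⟩ := by
  have := nfCoeff_apply x ⟨0, h0⟩
  simpa using this

lemma nfCoeff_two' {n : ℕ} (h1 : 1 < n) (x : Fin n → ℂ) : nfCoeff n x 2 = x ⟨1, h1⟩ := by
  have := nfCoeff_apply x ⟨1, h1⟩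
  simpa using this

lemma brTP0_single {n : ℕ} (s : ℕ) (hs1 : 1 ≤ s) (hsn : s ≤ n) (lam : ℂ) (x y : Fin n → ℂ) :
    brTP0 n (fun t => if t = s then lam else 0) x y
      = (nfCoeff n x 1 * nfCoeff n y 2 - nfCoeff n x 2 * nfCoeff n y 1) • (lam • nfE n s) := by
  unfold brTP0
  congr 1
  rw [Finset.sum_eq_single s]
  · simp
  · intro t _ ht
    simp [ht]
  · intro h
    exact absurd (Finset.mem_Icc.2 ⟨hs1, hsn⟩) h

lemma main_iso {n : ℕ} (hn : 5 ≤ n) (Bbr : (Fin n → ℂ) → (Fin n → ℂ) → (Fin n → ℂ))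
    (v : Fin n → ℂ)
    (hBxy : ∀ x y : Fin n → ℂ, Bbr x y =
      (x ⟨0, by omega⟩ * y ⟨1, by omega⟩ - x ⟨1, by omega⟩ * y ⟨0, by omega⟩) • v)
    (s : ℕ) (hs1 : 1 ≤ s) (hsn : s ≤ n) (lam : ℂ)
    (hv : ∀ k : Fin n, (k:ℕ)+1 < s → v k = 0)
    (hμ : v ⟨s-1, by omega⟩ ≠ 0)
    (a : ℂ) (ha : a ≠ 0) (hlead : lam * a ^ s = a ^ 3 * v ⟨s-1, by omega⟩) :
    TPIso n Bbr (brTP0 n fun t => if t = s then lam else 0) := by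
  have h0 : 0 < n := by omega
  have h1 : 1 < n := by omega
  obtain ⟨u, hu0, hucoeff⟩ := root_lemma s hs1 hsn v hv lam a ha hμ hlead
  have hbij := phiLM_bijective h0 u (by rw [hu0]; exact ha)
  set ψ := LinearEquiv.ofBijective (phiLM n u) hbij with hψ
  have hψ_apply : ∀ x, ψ x = phiFun n u x := fun x => rfl
  have hmul : ∀ x y, ψ (nfMul n x y) = nfMul n (ψ x) (ψ y) := by
    intro x y
    rw [hψ_apply, hψ_apply, hψ_apply]
    exact phiFun_mul u x y
  have hkey : ∀ x y, ψ (brTP0 n (fun t => if t = s then lam else 0) x y) = Bbr (ψ x) (ψ y) := by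
    intro x y
    rw [brTP0_single s hs1 hsn lam x y]
    rw [nfCoeff_one' h0 x, nfCoeff_one' h0 y, nfCoeff_two' h1 x, nfCoeff_two' h1 y]
    rw [map_smul, map_smul]
    have hEs : ψ (nfE n s) = ofPS n ((toPS n u)^s) := by
      rw [hψ_apply]
      exact phiFun_nfE u hs1
    rw [hEs]
    have hvv : lam • ofPS n ((toPS n u)^s) = (a^3) • v := by
      funext k
      rw [Pi.smul_apply, Pi.smul_apply, smul_eq_mul, smul_eq_mul]
      exact hucoeff k
    rw [hvv, hBxy]
    rw [hψ_apply, hψ_apply]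
    rw [phiFun_coord0 h0 u x, phiFun_coord0 h0 u y, phiFun_coord1 h1 u x, phiFun_coord1 h1 u y]
    rw [smul_smul]
    congr 1
    rw [hu0]
    ring
  refine ⟨ψ.symm, ?_, ?_⟩
  · intro x y
    apply ψ.injective
    rw [ψ.apply_symm_apply, hmul, ψ.apply_symm_apply, ψ.apply_symm_apply]
  · intro x y
    apply ψ.injective
    rw [ψ.apply_symm_apply, hkey, ψ.apply_symm_apply, ψ.apply_symm_apply]

end Stmt11Aux

open Stmt11Aux in
/-- for `n ≥ 5`, every transposed `0`-Poisson structure on `μ₀ⁿ`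
is isomorphic to `TP₀(1,0,…,0)`, `TP₀(0,1,0,…,0)`, `TP₀(0,0,α,0,…,0)` for
some `α ∈ ℂ`, or `TP₀(0,…,0,1ₛ,0,…,0)` for some `4 ≤ s ≤ n`. -/
theorem stmt_11 (n : ℕ) (hn : 5 ≤ n)
    (B : LieBracketOn (Fin n → ℂ)) (hB : IsTransposedPoisson n 0 B) :
    TPIso n B.br (brTP0 n fun t => if t = 1 then 1 else 0) ∨
    TPIso n B.br (brTP0 n fun t => if t = 2 then 1 else 0) ∨
    (∃ α : ℂ, TPIso n B.br (brTP0 n fun t => if t = 3 then α else 0)) ∨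
    (∃ s, 4 ≤ s ∧ s ≤ n ∧
      TPIso n B.br (brTP0 n fun t => if t = s then 1 else 0)) := by
  classical
  have h0 : (0:ℕ) < n := by omega
  have h1 : (1:ℕ) < n := by omega
  -- Step 0: bracket is bilinear-zero helpers
  have br0l : ∀ y, B.br 0 y = 0 := by
    intro y
    have h := B.smul_left 0 0 y
    simpa using h
  have antisym : ∀ x y, B.br y x = - B.br x y := by
    intro x y
    have h := B.alt (x + y)
    rw [B.add_left, B.add_right, B.add_right, B.alt x, B.alt y] at h
    rw [zero_add, add_zero] at h
    exact eq_neg_of_add_eq_zero_right h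
  have tp0 : ∀ x y z, B.br (nfMul n z x) y = - B.br x (nfMul n z y) := by
    intro x y z
    have h := hB x y z
    rw [zero_smul] at h
    exact eq_neg_of_add_eq_zero_left h.symm
  have mulE1 : ∀ m, 1 ≤ m → nfMul n (nfE n 1) (nfE n m) = nfE n (m+1) := by
    intro m hm
    rw [Stmt11Aux.mulE le_rfl hm, Nat.add_comm]
  have mulE2 : ∀ m, 1 ≤ m → nfMul n (nfE n 2) (nfE n m) = nfE n (m+2) := by
    intro m hm
    rw [Stmt11Aux.mulE (by omega) hm, Nat.add_comm]
  -- Step 1: all brackets of basis vectors vanish except [e1,e2]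
  have key0 : ∀ i j : ℕ, 1 ≤ i → 1 ≤ j → B.br (nfE n i) (nfE n (j+2)) = 0 := by
    intro i j hi hj
    have t1 := tp0 (nfE n (i+1)) (nfE n j) (nfE n 1)
    rw [mulE1 (i+1) (by omega), mulE1 j hj] at t1
    rw [show i+1+1 = i+2 from rfl] at t1
    have t2 := tp0 (nfE n i) (nfE n (j+1)) (nfE n 1)
    rw [mulE1 i hi, mulE1 (j+1) (by omega)] at t2
    rw [show j+1+1 = j+2 from rfl] at t2
    have t3 := tp0 (nfE n i) (nfE n j) (nfE n 2)
    rw [mulE2 i hi, mulE2 j hj] at t3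
    rw [t2, neg_neg] at t1
    rw [t1] at t3
    have h2 : (2:ℂ) • B.br (nfE n i) (nfE n (j+2)) = 0 := by
      rw [two_smul]
      nth_rewrite 1 [t3]
      rw [neg_add_cancel]
    rcases smul_eq_zero.1 h2 with h | h
    · exact absurd h two_ne_zero
    · exact h
  have brEE : ∀ i j : ℕ, 1 ≤ i → 3 ≤ j → B.br (nfE n i) (nfE n j) = 0 := by
    intro i j hi h3
    have : j = (j - 2) + 2 := by omega
    rw [this]
    exact key0 i (j-2) hi (by omega)
  have brEE' : ∀ i j : ℕ, 1 ≤ j → 3 ≤ i → B.br (nfE n i) (nfE n j) = 0 := by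
    intro i j hj h3
    rw [antisym, brEE j i hj h3, neg_zero]
  set v := B.br (nfE n 1) (nfE n 2) with hvdef
  have brBasis : ∀ i j : Fin n, B.br (nfE n ((i:ℕ)+1)) (nfE n ((j:ℕ)+1)) =
      (if (i:ℕ) = 0 ∧ (j:ℕ) = 1 then v else if (i:ℕ) = 1 ∧ (j:ℕ) = 0 then -v else 0) := by
    intro i j
    by_cases hij : (i:ℕ) = 0 ∧ (j:ℕ) = 1
    · rw [if_pos hij, hij.1, hij.2]
    · rw [if_neg hij]
      by_cases hji : (i:ℕ) = 1 ∧ (j:ℕ) = 0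
      · rw [if_pos hji, hji.1, hji.2]
        exact antisym _ _
      · rw [if_neg hji]
        rcases Nat.lt_or_ge ((j:ℕ)+1) 3 with hj3 | hj3
        · rcases Nat.lt_or_ge ((i:ℕ)+1) 3 with hi3 | hi3
          · have hieq : i = j := Fin.ext (by omega)
            rw [hieq]
            exact B.alt _
          · exact brEE' _ _ (by omega) (by omega)
        · exact brEE _ _ (by omega) (by omega)
  -- Step 2: bracket in coordinates
  have br_sum_left : ∀ (f : Fin n → (Fin n → ℂ)) (y : Fin n → ℂ),
      B.br (∑ i : Fin n, f i) y = ∑ i : Fin n, B.br (f i) y := by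
    intro f y
    induction (Finset.univ : Finset (Fin n)) using Finset.induction with
    | empty => simpa using br0l y
    | insert _ _ h ih => rw [Finset.sum_insert h, Finset.sum_insert h, B.add_left, ih]
  have br_sum_right : ∀ (f : Fin n → (Fin n → ℂ)) (x : Fin n → ℂ),
      B.br x (∑ i : Fin n, f i) = ∑ i : Fin n, B.br x (f i) := by
    intro f x
    rw [antisym, br_sum_left]
    rw [← Finset.sum_neg_distrib]
    refine Finset.sum_congr rfl fun i _ => ?_
    rw [antisym, neg_neg]
  have hBxy : ∀ x y : Fin n → ℂ, B.br x y =
      (x ⟨0, by omega⟩ * y ⟨1, by omega⟩ - x ⟨1, by omega⟩ * y ⟨0, by omega⟩) • v := by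
    intro x y
    conv_lhs => rw [Stmt11Aux.basis_expand x, Stmt11Aux.basis_expand y]
    rw [br_sum_left]
    have inner : ∀ i : Fin n,
        B.br (x i • nfE n ((i:ℕ)+1)) (∑ j : Fin n, y j • nfE n ((j:ℕ)+1))
        = ∑ j : Fin n, (x i * y j) •
            (if (i:ℕ) = 0 ∧ (j:ℕ) = 1 then v else if (i:ℕ) = 1 ∧ (j:ℕ) = 0 then -v else 0) := by
      intro i
      rw [B.smul_left, br_sum_right, Finset.smul_sum]
      refine Finset.sum_congr rfl fun j _ => ?_
      rw [B.smul_right, smul_smul, brBasis]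
    simp only [inner]
    rw [← Finset.sum_subset (Finset.subset_univ {(⟨0, by omega⟩ : Fin n), ⟨1, by omega⟩})]
    · rw [Finset.sum_pair (show (⟨0, by omega⟩ : Fin n) ≠ ⟨1, by omega⟩ by
        intro hc
        have := congrArg Fin.val hc
        simp only [Fin.val_mk] at this
        omega)]
      have hrow0 : (∑ j : Fin n, (x ⟨0, by omega⟩ * y j) •
          (if ((⟨0, by omega⟩ : Fin n):ℕ) = 0 ∧ (j:ℕ) = 1 then v
           else if ((⟨0, by omega⟩ : Fin n):ℕ) = 1 ∧ (j:ℕ) = 0 then -v else 0))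
          = (x ⟨0, by omega⟩ * y ⟨1, by omega⟩) • v := by
        rw [Finset.sum_eq_single (⟨1, by omega⟩ : Fin n)]
        · rw [if_pos ⟨rfl, rfl⟩]
        · intro b _ hb
          have hb1 : (b:ℕ) ≠ 1 := fun hc => hb (Fin.ext (by simp [hc]))
          rw [if_neg (fun hc => hb1 hc.2), if_neg (by rintro ⟨hc1, -⟩; simp at hc1), smul_zero]
        · intro h; exact absurd (Finset.mem_univ _) h
      have hrow1 : (∑ j : Fin n, (x ⟨1, by omega⟩ * y j) •
          (if ((⟨1, by omega⟩ : Fin n):ℕ) = 0 ∧ (j:ℕ) = 1 then v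
           else if ((⟨1, by omega⟩ : Fin n):ℕ) = 1 ∧ (j:ℕ) = 0 then -v else 0))
          = (x ⟨1, by omega⟩ * y ⟨0, by omega⟩) • (-v) := by
        rw [Finset.sum_eq_single (⟨0, by omega⟩ : Fin n)]
        · rw [if_neg (by rintro ⟨hc1, -⟩; simp at hc1), if_pos ⟨rfl, rfl⟩]
        · intro b _ hb
          have hb0 : (b:ℕ) ≠ 0 := fun hc => hb (Fin.ext (by simp [hc]))
          rw [if_neg (by rintro ⟨hc1, -⟩; simp at hc1), if_neg (fun hc => hb0 hc.2), smul_zero]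
        · intro h; exact absurd (Finset.mem_univ _) h
      rw [hrow0, hrow1, smul_neg, sub_smul, ← sub_eq_add_neg]
    · intro i _ hi
      simp only [Finset.mem_insert, Finset.mem_singleton] at hi
      push_neg at hi
      have hi0 : (i:ℕ) ≠ 0 := fun hc => hi.1 (Fin.ext (by simp [hc]))
      have hi1 : (i:ℕ) ≠ 1 := fun hc => hi.2 (Fin.ext (by simp [hc]))
      apply Finset.sum_eq_zero
      intro j _
      rw [if_neg (fun hc => hi0 hc.1), if_neg (fun hc => hi1 hc.1), smul_zero]
  -- Step 3: case analysis on v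
  by_cases hvz : v = 0
  · right; right; left
    refine ⟨0, LinearEquiv.refl ℂ _, fun x y => rfl, fun x y => ?_⟩
    simp only [LinearEquiv.refl_apply]
    rw [hBxy, hvz, smul_zero]
    unfold brTP0
    rw [Finset.sum_eq_zero, smul_zero]
    intro t _
    simp
  · by_cases hc0 : v ⟨0, by omega⟩ = 0
    · by_cases hc1 : v ⟨1, by omega⟩ = 0
      · by_cases hc2 : v ⟨2, by omega⟩ = 0
        · -- case s ≥ 4
          right; right; right
          have hex : ∃ m : ℕ, ∃ h : m < n, v ⟨m, h⟩ ≠ 0 := by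
            by_contra hcon
            push_neg at hcon
            apply hvz
            funext k
            have := hcon (k:ℕ) k.isLt
            simpa using this
          obtain ⟨hmn, hvm⟩ := Nat.find_spec hex
          have hm3 : 3 ≤ Nat.find hex := by
            by_contra hlt
            push_neg at hlt
            have hz : v ⟨Nat.find hex, hmn⟩ = 0 := by
              rcases (show Nat.find hex = 0 ∨ Nat.find hex = 1 ∨ Nat.find hex = 2 by omega)
                with h | h | h
              · rw [show (⟨Nat.find hex, hmn⟩ : Fin n) = ⟨0, by omega⟩ from Fin.ext h]
                exact hc0
              · rw [show (⟨Nat.find hex, hmn⟩ : Fin n) = ⟨1, by omega⟩ from Fin.ext h]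
                exact hc1
              · rw [show (⟨Nat.find hex, hmn⟩ : Fin n) = ⟨2, by omega⟩ from Fin.ext h]
                exact hc2
            exact hvm hz
          obtain ⟨a, haroot⟩ := IsAlgClosed.exists_pow_nat_eq (v ⟨Nat.find hex, hmn⟩)
            (show 0 < Nat.find hex - 2 by omega)
          have ha : a ≠ 0 := by
            intro hOops
            rw [hOops, zero_pow (by omega)] at haroot
            exact hvm haroot.symm
          refine ⟨Nat.find hex + 1, by omega, by omega, ?_⟩
          refine main_iso hn B.br v hBxy (Nat.find hex + 1) (by omega) (by omega) 1 ?_ ?_ a ha ?_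
          · intro k hk
            have hku := Nat.find_min hex (show (k:ℕ) < Nat.find hex by omega)
            push_neg at hku
            have := hku k.isLt
            simpa using this
          · exact hvm
          · have hidx : v ⟨Nat.find hex + 1 - 1, by omega⟩ = v ⟨Nat.find hex, hmn⟩ := rfl
            rw [one_mul, hidx, ← haroot, ← pow_add]
            congr 1
            omega
        · -- case s = 3
          right; right; left
          refine ⟨v ⟨2, by omega⟩, ?_⟩
          refine main_iso hn B.br v hBxy 3 (by omega) (by omega) (v ⟨2, by omega⟩) ?_ hc2 1
            one_ne_zero ?_
          · intro k hk
            rcases (show (k:ℕ) = 0 ∨ (k:ℕ) = 1 by omega) with h | h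
            · rw [show k = ⟨0, by omega⟩ from Fin.ext h]; exact hc0
            · rw [show k = ⟨1, by omega⟩ from Fin.ext h]; exact hc1
          · rw [one_pow, mul_one, one_mul]
      · -- case s = 2
        right; left
        have ha : (v ⟨1, by omega⟩)⁻¹ ≠ 0 := inv_ne_zero hc1
        refine main_iso hn B.br v hBxy 2 (by omega) (by omega) 1 ?_ hc1 (v ⟨1, by omega⟩)⁻¹ ha ?_
        · intro k hk
          rw [show k = ⟨0, by omega⟩ from Fin.ext (by simp only [Fin.val_mk]; omega)]
          exact hc0
        · rw [one_mul, show ((v ⟨1, by omega⟩)⁻¹)^3 = ((v ⟨1, by omega⟩)⁻¹)^2 * (v ⟨1, by omega⟩)⁻¹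
            from by ring, mul_assoc, inv_mul_cancel₀ hc1, mul_one]
    · -- case s = 1
      left
      obtain ⟨a, ha2⟩ := IsAlgClosed.exists_pow_nat_eq (v ⟨0, by omega⟩)⁻¹ (show 0 < 2 by omega)
      have ha : a ≠ 0 := by
        intro h
        rw [h, zero_pow (by omega)] at ha2
        exact hc0 (inv_eq_zero.1 ha2.symm)
      refine main_iso hn B.br v hBxy 1 le_rfl (by omega) 1
        (fun k hk => absurd hk (by omega)) hc0 a ha ?_
      rw [one_mul, pow_one, show a^3 = a * a^2 from by ring, mul_assoc, ha2,
        inv_mul_cancel₀ hc0, mul_one]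
end

section
/- Let n ≥ 5. If [-,-] is a Lie bracket on μ₀ⁿ making (μ₀ⁿ, ·, [-,-]) a transposed 1-Poisson algebra, then there exist α₂,…,αₙ ∈ ℂ such that [e₁,eᵢ] = Σ_{t=i}^n α_{t−i+2} eₜ for all 2 ≤ i ≤ n and [eᵢ,eⱼ] = 0 for all 2 ≤ i < j ≤ n; that is, the structure is TP₁(α₂,…,αₙ). -/
open Finset

lemma nfE_mul (n a b : ℕ) (ha : 1 ≤ a) (hb : 1 ≤ b) :
    nfMul n (nfE n a) (nfE n b) = nfE n (a + b) := by
  funext k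
  simp only [nfMul, nfE, mul_ite, mul_one, mul_zero, ite_and]
  rw [Finset.sum_comm]
  rcases le_or_gt b n with hbn | hbn
  · rw [Finset.sum_eq_single ⟨b - 1, by omega⟩]
    · rcases le_or_gt a n with han | han
      · rw [Finset.sum_eq_single ⟨a - 1, by omega⟩]
        · simp only [Fin.val_mk]
          rw [if_pos (by omega : b - 1 + 1 = b), if_pos (by omega : a - 1 + 1 = a)]
          by_cases hc : (k : ℕ) + 1 = a + b
          · rw [if_pos (by omega), if_pos hc]
          · rw [if_neg (by omega), if_neg hc]
        · intro i _ hi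
          have hne : (i : ℕ) ≠ a - 1 := fun h => hi (Fin.ext (by simp only [Fin.val_mk]; omega))
          simp only [Fin.val_mk]
          rw [if_neg (show ¬((i : ℕ) + 1 = a) from by omega)]
          simp
        · simp
      · rw [Finset.sum_eq_zero, eq_comm, if_neg (by omega)]
        intro i _
        simp only [Fin.val_mk]
        rw [if_pos (by omega : b - 1 + 1 = b), if_neg (show ¬((i : ℕ) + 1 = a) from by omega)]
        simp
    · intro j _ hj
      have hne : (j : ℕ) ≠ b - 1 := fun h => hj (Fin.ext (by simp only [Fin.val_mk]; omega))
      rw [Finset.sum_eq_zero]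
      intro i _
      rw [if_neg (show ¬((j : ℕ) + 1 = b) from by omega)]
      simp
    · simp
  · rw [Finset.sum_eq_zero, eq_comm, if_neg (by omega)]
    intro j _
    rw [Finset.sum_eq_zero]
    intro i _
    rw [if_neg (show ¬((j : ℕ) + 1 = b) from by omega)]
    simp

lemma nfE_of_gt (n i : ℕ) (h : n < i) : nfE n i = 0 := by
  funext k; simp only [nfE, Pi.zero_apply]; rw [if_neg (by omega)]

lemma nfMul_add_right (n : ℕ) (z x y : Fin n → ℂ) :
    nfMul n z (x + y) = nfMul n z x + nfMul n z y := by
  funext k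
  simp only [nfMul, Pi.add_apply, mul_add, ← Finset.sum_add_distrib]
  congr 1; funext i; congr 1; funext j
  split <;> simp

lemma nfMul_smul_right (n : ℕ) (c : ℂ) (z x : Fin n → ℂ) :
    nfMul n z (c • x) = c • nfMul n z x := by
  funext k
  simp only [nfMul, Pi.smul_apply, smul_eq_mul, Finset.mul_sum]
  congr 1; funext i; congr 1; funext j
  split <;> ring

lemma nfMul_zero_right (n : ℕ) (z : Fin n → ℂ) : nfMul n z 0 = 0 := by
  funext k; simp [nfMul]

lemma nfMul_sum_right (n : ℕ) (z : Fin n → ℂ) {ι : Type*} (s : Finset ι)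
    (f : ι → Fin n → ℂ) :
    nfMul n z (∑ t ∈ s, f t) = ∑ t ∈ s, nfMul n z (f t) := by
  classical
  induction s using Finset.induction with
  | empty => simp [nfMul_zero_right]
  | insert _ _ h ih => rw [Finset.sum_insert h, Finset.sum_insert h, nfMul_add_right, ih]

lemma basis_expand (n : ℕ) (x : Fin n → ℂ) :
    ∑ t ∈ Finset.Icc 1 n, nfCoeff n x t • nfE n t = x := by
  funext k
  simp only [Finset.sum_apply, Pi.smul_apply, nfE, nfCoeff, smul_eq_mul, mul_ite, mul_one,
    mul_zero]
  rw [Finset.sum_eq_single ((k : ℕ) + 1)]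
  · rw [if_pos rfl, Finset.sum_eq_single k]
    · rw [if_pos rfl]
    · intro m _ hm
      rw [if_neg (fun h => hm (Fin.ext (by omega)))]
    · simp
  · intro t _ ht
    rw [if_neg (by omega)]
  · intro h
    exact absurd (by simp only [Finset.mem_Icc]; omega) h

lemma shift_sum {M : Type*} [AddCommMonoid M] (i N : ℕ) (f : ℕ → M)
    (hf : f (N + 1) = 0) :
    ∑ t ∈ Finset.Icc i N, f (t + 1) = ∑ s ∈ Finset.Icc (i + 1) N, f s := by
  rcases le_or_gt i N with hiN | hiN
  · rcases N with _ | m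
    · have hi0 : i = 0 := by omega
      subst hi0
      rw [Finset.Icc_self, Finset.sum_singleton, Finset.Icc_eq_empty (by omega),
        Finset.sum_empty]
      exact hf
    · rw [Finset.sum_Icc_succ_top hiN, hf, add_zero, ← Finset.map_add_right_Icc i m 1,
        Finset.sum_map]
      simp only [addRightEmbedding_apply]
  · rw [Finset.Icc_eq_empty (by omega), Finset.Icc_eq_empty (by omega),
      Finset.sum_empty, Finset.sum_empty]


/-- for `n ≥ 5`, any transposed `1`-Poisson structure on `μ₀ⁿ` is
of the form `TP₁(α₂,…,αₙ)`: there exist `α₂,…,αₙ` with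
`[e₁,eᵢ] = ∑_{t=i}^n α_{t-i+2} eₜ` for `2 ≤ i ≤ n` and `[eᵢ,eⱼ] = 0` for
`2 ≤ i < j ≤ n`. -/
theorem stmt_12 (n : ℕ) (hn : 5 ≤ n)
    (B : LieBracketOn (Fin n → ℂ)) (hB : IsTransposedPoisson n 1 B) :
    ∃ α : ℕ → ℂ,
      (∀ i, 2 ≤ i → i ≤ n →
        B.br (nfE n 1) (nfE n i) =
          ∑ t ∈ Finset.Icc i n, α (t + 2 - i) • nfE n t) ∧
      ∀ i j, 2 ≤ i → i < j → j ≤ n → B.br (nfE n i) (nfE n j) = 0 := by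
  have br0r : ∀ x, B.br x 0 = 0 := by
    intro x
    have h := B.add_right x 0 0
    rw [add_zero] at h
    exact (left_eq_add.mp h)
  have h1 : ∀ a i j, 1 ≤ a → 1 ≤ i → 1 ≤ j →
      nfMul n (nfE n a) (B.br (nfE n i) (nfE n j)) =
        B.br (nfE n (a + i)) (nfE n j) + B.br (nfE n i) (nfE n (a + j)) := by
    intro a i j ha hi hj
    have h := hB (nfE n i) (nfE n j) (nfE n a)
    rw [one_smul, nfE_mul n a i ha hi, nfE_mul n a j ha hj] at h
    exact h
  have mulE : ∀ a, 1 ≤ a → ∀ v : Fin n → ℂ,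
      nfMul n (nfE n a) v = ∑ t ∈ Finset.Icc 1 n, nfCoeff n v t • nfE n (a + t) := by
    intro a ha v
    conv_lhs => rw [← basis_expand n v]
    rw [nfMul_sum_right]
    refine Finset.sum_congr rfl fun t ht => ?_
    rw [Finset.mem_Icc] at ht
    rw [nfMul_smul_right, nfE_mul n a t ha ht.1]
  have h2 : ∀ v : Fin n → ℂ, nfMul n (nfE n 2) v =
      nfMul n (nfE n 1) (nfMul n (nfE n 1) v) := by
    intro v
    rw [mulE 1 le_rfl v, nfMul_sum_right, mulE 2 (by omega) v]
    refine Finset.sum_congr rfl fun t ht => ?_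
    rw [Finset.mem_Icc] at ht
    rw [nfMul_smul_right, nfE_mul n 1 (1 + t) le_rfl (by omega)]
    rw [show (1 : ℕ) + (1 + t) = 2 + t from by omega]
  have h3' : ∀ i j, 2 ≤ i → 2 ≤ j → B.br (nfE n i) (nfE n j) = 0 := by
    intro i j hi hj
    obtain ⟨p, rfl⟩ : ∃ p, i = 1 + p := ⟨i - 1, by omega⟩
    obtain ⟨q, rfl⟩ : ∃ q, j = 1 + q := ⟨j - 1, by omega⟩
    have hp : 1 ≤ p := by omega
    have hq : 1 ≤ q := by omega
    have A := h1 2 p q (by omega) hp hq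
    have B1 := h1 1 p q le_rfl hp hq
    have B2 := h1 1 (1 + p) q le_rfl (by omega) hq
    have B3 := h1 1 p (1 + q) le_rfl hp (by omega)
    have e2b := h2 (B.br (nfE n p) (nfE n q))
    rw [A, B1, nfMul_add_right, B2, B3] at e2b
    rw [show (1 : ℕ) + (1 + p) = 2 + p from by omega,
      show (1 : ℕ) + (1 + q) = 2 + q from by omega] at e2b
    set X := B.br (nfE n (2 + p)) (nfE n q) with hX
    set Y := B.br (nfE n p) (nfE n (2 + q)) with hY
    set c := B.br (nfE n (1 + p)) (nfE n (1 + q)) with hc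
    -- e2b : X + Y = X + c + (c + Y)
    have h4 : Y = c + c + Y := by
      rw [add_assoc X c (c + Y)] at e2b
      have h := add_left_cancel e2b
      rw [← add_assoc] at h
      exact h
    have hcc : c + c = 0 := right_eq_add.mp h4
    have h2c : (2 : ℂ) • c = 0 := by rw [two_smul]; exact hcc
    exact (smul_eq_zero.mp h2c).resolve_left (by norm_num)
  have hS : ∀ j, 2 ≤ j → B.br (nfE n 1) (nfE n (j + 1)) =
      nfMul n (nfE n 1) (B.br (nfE n 1) (nfE n j)) := by
    intro j hj
    have h := h1 1 1 j le_rfl le_rfl (by omega)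
    rw [h3' (1 + 1) j (by omega) hj, zero_add, Nat.add_comm 1 j] at h
    exact h.symm
  have hc1 : nfCoeff n (B.br (nfE n 1) (nfE n 2)) 1 = 0 := by
    have h := h1 (n - 1) 1 2 (by omega) le_rfl (by omega)
    rw [show n - 1 + 1 = n from by omega, show n - 1 + 2 = n + 1 from by omega,
      h3' n 2 (by omega) le_rfl, nfE_of_gt n (n + 1) (by omega), br0r, add_zero,
      mulE (n - 1) (by omega)] at h
    have h' := congrFun h ⟨n - 1, by omega⟩
    simp only [Finset.sum_apply, Pi.smul_apply, nfE, smul_eq_mul, Pi.zero_apply,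
      Fin.val_mk] at h'
    rw [Finset.sum_eq_single 1] at h'
    · rw [if_pos rfl, mul_one] at h'
      exact h'
    · intro t ht hne
      rw [Finset.mem_Icc] at ht
      rw [if_neg (by omega), mul_zero]
    · intro habs
      exact absurd (by rw [Finset.mem_Icc]; omega) habs
  refine ⟨fun t => nfCoeff n (B.br (nfE n 1) (nfE n 2)) t, ?_,
    fun i j hi hij hj => h3' i j hi (by omega)⟩
  intro i hi hin
  clear hin
  induction i, hi using Nat.le_induction with
  | base =>
    have hb := basis_expand n (B.br (nfE n 1) (nfE n 2))
    rw [Finset.Icc_eq_cons_Ioc (by omega : 1 ≤ n), Finset.sum_cons,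
      ← Finset.Icc_add_one_left_eq_Ioc, hc1, zero_smul, zero_add] at hb
    conv_lhs => rw [← hb]
    refine Finset.sum_congr rfl fun t ht => ?_
    rw [show t + 2 - 2 = t from by omega]
  | succ i hi2 ih =>
    rw [hS i hi2, ih]
    rw [nfMul_sum_right]
    have step1 : ∀ t ∈ Finset.Icc i n,
        nfMul n (nfE n 1) (nfCoeff n (B.br (nfE n 1) (nfE n 2)) (t + 2 - i) • nfE n t)
          = (fun s => nfCoeff n (B.br (nfE n 1) (nfE n 2)) (s + 1 - i) • nfE n s) (t + 1) := by
      intro t ht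
      rw [Finset.mem_Icc] at ht
      rw [nfMul_smul_right, nfE_mul n 1 t le_rfl (by omega)]
      rw [show (1 : ℕ) + t = t + 1 from by omega, show t + 2 - i = t + 1 + 1 - i from by omega]
    rw [Finset.sum_congr rfl step1,
      shift_sum i n (fun s => nfCoeff n (B.br (nfE n 1) (nfE n 2)) (s + 1 - i) • nfE n s)
        (by simp only [nfE_of_gt n (n + 1) (by omega), smul_zero])]
    refine Finset.sum_congr rfl fun s hs => ?_
    rw [show s + 1 - i = s + 2 - (i + 1) from by omega]
end

section
/- Let n ≥ 5, let 3 ≤ s ≤ n, and let α₂, αₛ, α_{s+1}, …, αₙ ∈ ℂ with α₂ ≠ 0 and αₛ ≠ 0. Then the transposed 1-Poisson algebra TP₁(α₂,0,…,0,αₛ,…,αₙ) (with α₃ = … = α_{s−1} = 0) is isomorphic to TP₁(1,0,…,0,α,0,…,0) for some nonzero α ∈ ℂ (the entry α being in position s). -/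
open Finset

section Aux13

open Finset Polynomial



noncomputable def toP (n : ℕ) (x : Fin n → ℂ) : Polynomial ℂ :=
  ∑ k : Fin n, Polynomial.C (x k) * Polynomial.X ^ ((k : ℕ) + 1)

noncomputable def ofP (n : ℕ) (f : Polynomial ℂ) : Fin n → ℂ :=
  fun k => f.coeff ((k : ℕ) + 1)

lemma sum_fin_ite (n d : ℕ) (g : Fin n → ℂ) :
    (∑ k : Fin n, if (k : ℕ) + 1 = d then g k else 0)
      = if h : 1 ≤ d ∧ d ≤ n then g ⟨d - 1, by omega⟩ else 0 := by
  split_ifs with h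
  · rw [Finset.sum_eq_single (⟨d - 1, by omega⟩ : Fin n)]
    · rw [if_pos]; simp; omega
    · intro k _ hk
      rw [if_neg]
      intro he; apply hk; apply Fin.ext; simp; omega
    · intro h'; exact absurd (Finset.mem_univ _) h'
  · apply Finset.sum_eq_zero
    intro k _
    rw [if_neg]
    have := k.isLt; omega

lemma coeff_toP (n : ℕ) (x : Fin n → ℂ) (d : ℕ) :
    (toP n x).coeff d = nfCoeff n x d := by
  unfold toP nfCoeff
  rw [Polynomial.finset_sum_coeff]
  refine Finset.sum_congr rfl fun k _ => ?_
  rw [Polynomial.coeff_C_mul, Polynomial.coeff_X_pow]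
  by_cases h : (k : ℕ) + 1 = d
  · simp [h]
  · simp [h, Ne.symm h]

lemma nfCoeff_eq (n : ℕ) (x : Fin n → ℂ) (d : ℕ) :
    nfCoeff n x d = if h : 1 ≤ d ∧ d ≤ n then x ⟨d - 1, by omega⟩ else 0 := by
  unfold nfCoeff; exact sum_fin_ite n d x

lemma toP_coeff_zero (n : ℕ) (x : Fin n → ℂ) : (toP n x).coeff 0 = 0 := by
  rw [coeff_toP, nfCoeff_eq]; simp

lemma toP_coeff_fin (n : ℕ) (x : Fin n → ℂ) (k : Fin n) :
    (toP n x).coeff ((k : ℕ) + 1) = x k := by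
  rw [coeff_toP, nfCoeff_eq]
  rw [dif_pos ⟨by omega, by omega⟩]
  congr 1

lemma coeff_toP_ofP (n : ℕ) (f : Polynomial ℂ) (d : ℕ) :
    (toP n (ofP n f)).coeff d = if 1 ≤ d ∧ d ≤ n then f.coeff d else 0 := by
  rw [coeff_toP, nfCoeff_eq]
  split_ifs with h
  · show f.coeff (d - 1 + 1) = f.coeff d
    congr 1; omega
  · rfl

lemma coeff_toP_ofP_of (n : ℕ) (f : Polynomial ℂ) (h0 : f.coeff 0 = 0)
    (d : ℕ) (hd : d ≤ n) : (toP n (ofP n f)).coeff d = f.coeff d := by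
  rw [coeff_toP_ofP]
  rcases Nat.eq_zero_or_pos d with rfl | hd1
  · simp [h0]
  · rw [if_pos ⟨hd1, hd⟩]

lemma toP_add (n : ℕ) (x y : Fin n → ℂ) : toP n (x + y) = toP n x + toP n y := by
  unfold toP
  rw [← Finset.sum_add_distrib]
  refine Finset.sum_congr rfl fun k _ => ?_
  rw [Pi.add_apply, Polynomial.C_add, add_mul]

lemma toP_smul (n : ℕ) (c : ℂ) (x : Fin n → ℂ) :
    toP n (c • x) = Polynomial.C c * toP n x := by
  unfold toP
  rw [Finset.mul_sum]
  refine Finset.sum_congr rfl fun k _ => ?_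
  rw [Pi.smul_apply, smul_eq_mul, Polynomial.C_mul, mul_assoc]




lemma nfMul_coeff (n : ℕ) (x y : Fin n → ℂ) (k : Fin n) :
    nfMul n x y k = (toP n x * toP n y).coeff ((k : ℕ) + 1) := by
  rw [Polynomial.coeff_mul]
  have h1 : ∀ ab : ℕ × ℕ, (toP n x).coeff ab.1 * (toP n y).coeff ab.2
      = ∑ i : Fin n, ∑ j : Fin n,
          if ((i : ℕ) + 1, (j : ℕ) + 1) = ab then x i * y j else 0 := by
    intro ab
    rw [coeff_toP, coeff_toP]
    unfold nfCoeff
    rw [Finset.sum_mul_sum]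
    refine Finset.sum_congr rfl fun i _ => Finset.sum_congr rfl fun j _ => ?_
    by_cases hi : (i : ℕ) + 1 = ab.1 <;> by_cases hj : (j : ℕ) + 1 = ab.2
    · rw [if_pos hi, if_pos hj, if_pos (by rw [Prod.ext_iff]; exact ⟨hi, hj⟩)]
    · rw [if_pos hi, if_neg hj, mul_zero, if_neg (by rw [Prod.ext_iff]; tauto)]
    · rw [if_neg hi, zero_mul, if_neg (by rw [Prod.ext_iff]; tauto)]
    · rw [if_neg hi, zero_mul, if_neg (by rw [Prod.ext_iff]; tauto)]
  simp_rw [h1]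
  rw [Finset.sum_comm]
  refine Finset.sum_congr rfl fun i _ => ?_
  rw [Finset.sum_comm]
  refine Finset.sum_congr rfl fun j _ => ?_
  rw [Finset.sum_ite_eq (Finset.HasAntidiagonal.antidiagonal ((k : ℕ) + 1)) (((i:ℕ)+1, (j:ℕ)+1))
    (fun _ => x i * y j)]
  simp only [Finset.HasAntidiagonal.mem_antidiagonal]
  exact if_congr ⟨fun h => by omega, fun h => by omega⟩ rfl rfl

lemma nfMul_eq (n : ℕ) (x y : Fin n → ℂ) :
    nfMul n x y = ofP n (toP n x * toP n y) :=
  funext fun k => nfMul_coeff n x y k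

lemma pow_coeff_lt {f : Polynomial ℂ} (hf : f.coeff 0 = 0) {k d : ℕ} (h : d < k) :
    (f ^ k).coeff d = 0 := by
  have hf' : f = f.divX * X := by
    conv_lhs => rw [← Polynomial.divX_mul_X_add f]
    rw [hf, Polynomial.C_0, add_zero]
  rw [hf', mul_pow, Polynomial.coeff_mul_X_pow', if_neg (by omega)]

lemma pow_coeff_self {f : Polynomial ℂ} (hf : f.coeff 0 = 0) (k : ℕ) :
    (f ^ k).coeff k = (f.coeff 1) ^ k := by
  have hf' : f = f.divX * X := by
    conv_lhs => rw [← Polynomial.divX_mul_X_add f]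
    rw [hf, Polynomial.C_0, add_zero]
  conv_lhs => rw [hf', mul_pow, Polynomial.coeff_mul_X_pow']
  rw [if_pos le_rfl, Nat.sub_self]
  rw [Polynomial.coeff_zero_eq_eval_zero, Polynomial.eval_pow,
    ← Polynomial.coeff_zero_eq_eval_zero, Polynomial.coeff_divX]

lemma mixed_coeff_lt {f g : Polynomial ℂ} (hf : f.coeff 0 = 0) (hg : g.coeff 0 = 0)
    {i l d : ℕ} (h : d < i + l) : (f ^ i * g ^ l).coeff d = 0 := by
  rw [Polynomial.coeff_mul]
  apply Finset.sum_eq_zero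
  intro ab hab
  rw [Finset.HasAntidiagonal.mem_antidiagonal] at hab
  rcases Nat.lt_or_ge ab.1 i with h1 | h1
  · rw [pow_coeff_lt hf h1, zero_mul]
  · rw [pow_coeff_lt hg (by omega), mul_zero]

lemma mixed_coeff_self {f g : Polynomial ℂ} (hf : f.coeff 0 = 0) (hg : g.coeff 0 = 0)
    (i l : ℕ) : (f ^ i * g ^ l).coeff (i + l) = (f.coeff 1) ^ i * (g.coeff 1) ^ l := by
  rw [Polynomial.coeff_mul]
  rw [Finset.sum_eq_single (i, l)]
  · rw [pow_coeff_self hf, pow_coeff_self hg]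
  · intro ab hab hne
    rw [Finset.HasAntidiagonal.mem_antidiagonal] at hab
    rcases Nat.lt_or_ge ab.1 i with h1 | h1
    · rw [pow_coeff_lt hf h1, zero_mul]
    · have : ab.2 < l := by
        rcases Nat.lt_or_ge ab.2 l with h2 | h2
        · exact h2
        · exfalso; apply hne
          have : ab.1 = i := by omega
          have : ab.2 = l := by omega
          exact Prod.ext (by omega) (by omega)
      rw [pow_coeff_lt hg this, mul_zero]
  · intro hni
    exfalso; exact hni (by rw [Finset.HasAntidiagonal.mem_antidiagonal])

lemma aeval_coeff {p : Polynomial ℂ} (hp : p.coeff 0 = 0) (f : Polynomial ℂ) (d : ℕ) :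
    (Polynomial.aeval p f).coeff d
      = ∑ k ∈ Finset.range (d + 1), f.coeff k * (p ^ k).coeff d := by
  conv_lhs => rw [f.as_sum_range' (max (f.natDegree + 1) (d + 1))
    (lt_of_lt_of_le (Nat.lt_succ_self _) (le_max_left _ _))]
  rw [map_sum, Polynomial.finset_sum_coeff]
  rw [← Finset.sum_subset (Finset.range_subset_range.mpr (le_max_right (f.natDegree+1) (d+1)))]
  · refine Finset.sum_congr rfl fun k _ => ?_
    rw [Polynomial.aeval_monomial, Polynomial.algebraMap_eq, Polynomial.coeff_C_mul]
  · intro k hk hnk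
    rw [Finset.mem_range] at hk hnk
    rw [Polynomial.aeval_monomial, Polynomial.algebraMap_eq, Polynomial.coeff_C_mul,
      pow_coeff_lt hp (by omega), mul_zero]

lemma aeval_coeff_zero {p : Polynomial ℂ} (hp : p.coeff 0 = 0) (f : Polynomial ℂ) :
    (Polynomial.aeval p f).coeff 0 = f.coeff 0 := by
  rw [aeval_coeff hp]
  simp

lemma aeval_coeff_one {p : Polynomial ℂ} (hp : p.coeff 0 = 0) (f : Polynomial ℂ) :
    (Polynomial.aeval p f).coeff 1 = f.coeff 1 * p.coeff 1 := by
  rw [aeval_coeff hp]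
  rw [Finset.sum_range_succ, Finset.sum_range_one]
  simp [pow_one, Polynomial.coeff_one]

lemma aeval_coeff_congr {p : Polynomial ℂ} (hp : p.coeff 0 = 0) {f g : Polynomial ℂ}
    {d : ℕ} (h : ∀ k, k ≤ d → f.coeff k = g.coeff k) :
    (Polynomial.aeval p f).coeff d = (Polynomial.aeval p g).coeff d := by
  rw [aeval_coeff hp, aeval_coeff hp]
  refine Finset.sum_congr rfl fun k hk => ?_
  rw [Finset.mem_range] at hk
  rw [h k (by omega)]

lemma mul_coeff_congr {f f' g g' : Polynomial ℂ} (d : ℕ)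
    (hf : ∀ k, k ≤ d → f.coeff k = f'.coeff k)
    (hg : ∀ k, k ≤ d → g.coeff k = g'.coeff k) :
    (f * g).coeff d = (f' * g').coeff d := by
  rw [Polynomial.coeff_mul, Polynomial.coeff_mul]
  refine Finset.sum_congr rfl fun ab hab => ?_
  rw [Finset.HasAntidiagonal.mem_antidiagonal] at hab
  rw [hf ab.1 (by omega), hg ab.2 (by omega)]

lemma mul_coeff_congr_right {W R R' : Polynomial ℂ} (hW0 : W.coeff 0 = 0)
    (hW1 : W.coeff 1 = 0) {n d : ℕ} (hd : d ≤ n)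
    (h : ∀ k, k + 2 ≤ n → R.coeff k = R'.coeff k) :
    (W * R).coeff d = (W * R').coeff d := by
  rw [Polynomial.coeff_mul, Polynomial.coeff_mul]
  refine Finset.sum_congr rfl fun ab hab => ?_
  rw [Finset.HasAntidiagonal.mem_antidiagonal] at hab
  rcases Nat.lt_or_ge ab.1 2 with h1 | h1
  · interval_cases h' : ab.1
    · rw [hW0, zero_mul, zero_mul]
    · rw [hW1, zero_mul, zero_mul]
  · rw [h ab.2 (by omega)]



noncomputable def Qp (n : ℕ) (α : ℕ → ℂ) : Polynomial ℂ :=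
  ∑ m ∈ Finset.range (n - 1), Polynomial.C (α (m + 2)) * Polynomial.X ^ m

lemma Qp_coeff (n : ℕ) (α : ℕ → ℂ) (d : ℕ) :
    (Qp n α).coeff d = if d < n - 1 then α (d + 2) else 0 := by
  unfold Qp
  rw [Polynomial.finset_sum_coeff]
  have h1 : ∀ m ∈ Finset.range (n-1),
      (Polynomial.C (α (m + 2)) * Polynomial.X ^ m).coeff d
        = if d = m then α (m + 2) else 0 := by
    intro m _
    rw [Polynomial.coeff_C_mul, Polynomial.coeff_X_pow]
    split_ifs <;> simp
  rw [Finset.sum_congr rfl h1]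
  rw [Finset.sum_ite_eq (Finset.range (n-1)) d (fun m => α (m + 2))]
  simp [Finset.mem_range]

lemma nfCoeff_one_eq (n : ℕ) (x : Fin n → ℂ) : nfCoeff n x 1 = (toP n x).coeff 1 :=
  (coeff_toP n x 1).symm

lemma brTP1_coeff (n : ℕ) (α : ℕ → ℂ) (x y : Fin n → ℂ) (k : Fin n) :
    brTP1 n α x y k =
      ((Polynomial.C (nfCoeff n x 1) * toP n y
        - Polynomial.C (nfCoeff n y 1) * toP n x) * Qp n α).coeff ((k : ℕ) + 1) := by
  have hk : (k : ℕ) + 1 ≤ n := k.isLt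
  -- LHS computation
  have lhs_eq : brTP1 n α x y k
      = ∑ i ∈ Finset.Icc 2 ((k : ℕ) + 1),
          (nfCoeff n x 1 * nfCoeff n y i - nfCoeff n x i * nfCoeff n y 1)
            * α ((k : ℕ) + 3 - i) := by
    unfold brTP1
    rw [Finset.sum_apply]
    have inner : ∀ i, (((nfCoeff n x 1 * nfCoeff n y i - nfCoeff n x i * nfCoeff n y 1) •
        ∑ t ∈ Finset.Icc i n, α (t + 2 - i) • nfE n t) k)
        = (nfCoeff n x 1 * nfCoeff n y i - nfCoeff n x i * nfCoeff n y 1)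
            * (if i ≤ (k:ℕ) + 1 then α ((k:ℕ) + 3 - i) else 0) := by
      intro i
      rw [Pi.smul_apply, smul_eq_mul]
      congr 1
      rw [Finset.sum_apply]
      have h2 : ∀ t ∈ Finset.Icc i n, (α (t + 2 - i) • nfE n t) k
          = if t = (k:ℕ)+1 then α ((k:ℕ) + 3 - i) else 0 := by
        intro t ht
        rw [Finset.mem_Icc] at ht
        rw [Pi.smul_apply, smul_eq_mul]
        unfold nfE
        by_cases h : (k:ℕ) + 1 = t
        · rw [if_pos h, if_pos h.symm, mul_one]
          congr 1
          omega
        · rw [if_neg h, if_neg (Ne.symm h), mul_zero]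
      rw [Finset.sum_congr rfl h2]
      rw [Finset.sum_ite_eq' (Finset.Icc i n) ((k:ℕ)+1) (fun _ => α ((k:ℕ) + 3 - i))]
      simp only [Finset.mem_Icc]
      exact if_congr ⟨fun h => h.1, fun h => ⟨h, hk⟩⟩ rfl rfl
    rw [Finset.sum_congr rfl (fun i _ => inner i)]
    rw [← Finset.sum_subset (Finset.Icc_subset_Icc le_rfl hk)]
    · refine Finset.sum_congr rfl fun i hi => ?_
      rw [Finset.mem_Icc] at hi
      rw [if_pos hi.2]
    · intro i hi hni
      rw [Finset.mem_Icc] at hi hni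
      rw [if_neg (by omega), mul_zero]
  rw [lhs_eq]
  -- RHS computation
  rw [Polynomial.coeff_mul]
  rw [Finset.Nat.sum_antidiagonal_eq_sum_range_succ_mk]
  rw [← Finset.sum_subset (show Finset.Icc 2 ((k:ℕ)+1) ⊆ Finset.range ((k:ℕ)+1+1) by
    intro i hi; rw [Finset.mem_Icc] at hi; rw [Finset.mem_range]; omega)]
  · refine Finset.sum_congr rfl fun i hi => ?_
    rw [Finset.mem_Icc] at hi
    rw [Polynomial.coeff_sub, Polynomial.coeff_C_mul, Polynomial.coeff_C_mul,
      coeff_toP, coeff_toP, Qp_coeff]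
    rw [if_pos (by omega)]
    have : (k:ℕ) + 1 - i + 2 = (k:ℕ) + 3 - i := by omega
    rw [this]
    ring
  · intro i hi hni
    rw [Finset.mem_range] at hi
    rw [Finset.mem_Icc] at hni
    have hi01 : i = 0 ∨ i = 1 := by omega
    rcases hi01 with rfl | rfl
    · rw [Polynomial.coeff_sub, Polynomial.coeff_C_mul, Polynomial.coeff_C_mul,
        toP_coeff_zero, toP_coeff_zero]
      ring_nf
    · rw [Polynomial.coeff_sub, Polynomial.coeff_C_mul, Polynomial.coeff_C_mul,
        ← nfCoeff_one_eq, ← nfCoeff_one_eq]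
      ring_nf




-- ### the linear map
noncomputable def phiMap (n : ℕ) (p : Polynomial ℂ) : (Fin n → ℂ) →ₗ[ℂ] (Fin n → ℂ) where
  toFun x := ofP n (Polynomial.aeval p (toP n x))
  map_add' x y := by
    funext k
    show (Polynomial.aeval p (toP n (x + y))).coeff _ = _
    rw [toP_add, map_add, Polynomial.coeff_add]
    rfl
  map_smul' c x := by
    funext k
    show (Polynomial.aeval p (toP n (c • x))).coeff _ = _
    rw [toP_smul, map_mul, Polynomial.aeval_C, Polynomial.algebraMap_eq,
      Polynomial.coeff_C_mul]
    rfl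

lemma phiMap_apply (n : ℕ) (p : Polynomial ℂ) (x : Fin n → ℂ) (k : Fin n) :
    phiMap n p x k = (Polynomial.aeval p (toP n x)).coeff ((k : ℕ) + 1) := rfl

lemma toP_phiMap_coeff (n : ℕ) (p : Polynomial ℂ) (hp : p.coeff 0 = 0)
    (x : Fin n → ℂ) (d : ℕ) (hd : d ≤ n) :
    (toP n (phiMap n p x)).coeff d = (Polynomial.aeval p (toP n x)).coeff d := by
  have h : phiMap n p x = ofP n (Polynomial.aeval p (toP n x)) := rfl
  rw [h]
  exact coeff_toP_ofP_of n _ (by rw [aeval_coeff_zero hp, toP_coeff_zero]) d hd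

lemma phiMap_inj (n : ℕ) (p : Polynomial ℂ) (hp : p.coeff 0 = 0)
    (hp1 : p.coeff 1 ≠ 0) : Function.Injective (phiMap n p) := by
  rw [injective_iff_map_eq_zero]
  intro x hx
  have key : ∀ m : ℕ, ∀ k : Fin n, (k : ℕ) = m → x k = 0 := by
    intro m
    induction m using Nat.strong_induction_on with
    | _ m ih =>
      intro k hk
      have h1 : (Polynomial.aeval p (toP n x)).coeff ((k : ℕ) + 1) = 0 := by
        have := congrFun hx k
        rw [phiMap_apply] at this
        exact this
      rw [aeval_coeff hp] at h1
      rw [Finset.sum_eq_single ((k : ℕ) + 1)] at h1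
      · rw [toP_coeff_fin, pow_coeff_self hp] at h1
        exact (mul_eq_zero.mp h1).resolve_right (pow_ne_zero _ hp1)
      · intro j hj hne
        rw [Finset.mem_range] at hj
        rcases Nat.eq_zero_or_pos j with rfl | hj1
        · rw [toP_coeff_zero, zero_mul]
        · have hjk : j - 1 < m := by omega
          have : (toP n x).coeff j = 0 := by
            have hjn : j - 1 < n := by have := k.isLt; omega
            have : (toP n x).coeff ((⟨j - 1, hjn⟩ : Fin n) + 1) = x ⟨j - 1, hjn⟩ :=
              toP_coeff_fin n x _
            rw [ih (j-1) hjk ⟨j - 1, hjn⟩ rfl] at this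
            have hj' : ((⟨j - 1, hjn⟩ : Fin n) : ℕ) + 1 = j := by simp; omega
            rw [← hj']
            exact this
          rw [this, zero_mul]
      · intro h; exact absurd (Finset.self_mem_range_succ _) h
  funext k
  exact key (k : ℕ) k rfl

noncomputable def phiEquiv (n : ℕ) (p : Polynomial ℂ) (hp : p.coeff 0 = 0)
    (hp1 : p.coeff 1 ≠ 0) : (Fin n → ℂ) ≃ₗ[ℂ] (Fin n → ℂ) :=
  LinearEquiv.ofBijective (phiMap n p)
    ⟨phiMap_inj n p hp hp1, (LinearMap.injective_iff_surjective).mp (phiMap_inj n p hp hp1)⟩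

lemma phi_mul (n : ℕ) (p : Polynomial ℂ) (hp : p.coeff 0 = 0) (x y : Fin n → ℂ) :
    phiMap n p (nfMul n x y) = nfMul n (phiMap n p x) (phiMap n p y) := by
  funext k
  have hk : (k : ℕ) + 1 ≤ n := k.isLt
  rw [phiMap_apply, nfMul_coeff]
  rw [nfMul_eq]
  have step1 : (Polynomial.aeval p (toP n (ofP n (toP n x * toP n y)))).coeff ((k:ℕ)+1)
      = (Polynomial.aeval p (toP n x * toP n y)).coeff ((k:ℕ)+1) := by
    apply aeval_coeff_congr hp
    intro j hj
    exact coeff_toP_ofP_of n _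
      (by rw [Polynomial.mul_coeff_zero, toP_coeff_zero, zero_mul]) j (by omega)
  rw [step1, map_mul]
  apply mul_coeff_congr ((k:ℕ)+1)
  · intro j hj
    exact ((toP_phiMap_coeff n p hp x j (by omega))).symm
  · intro j hj
    exact ((toP_phiMap_coeff n p hp y j (by omega))).symm

lemma phi_br (n : ℕ) (p : Polynomial ℂ) (hp : p.coeff 0 = 0) (α α' : ℕ → ℂ)
    (HQ : ∀ m, m + 2 ≤ n →
      (Polynomial.aeval p (Qp n α)).coeff m
        = (Polynomial.C (p.coeff 1) * Qp n α').coeff m)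
    (x y : Fin n → ℂ) :
    phiMap n p (brTP1 n α x y) = brTP1 n α' (phiMap n p x) (phiMap n p y) := by
  funext k
  have hk : (k : ℕ) + 1 ≤ n := k.isLt
  set a := p.coeff 1
  set f := toP n x
  set g := toP n y
  set G := Polynomial.aeval p f with hG
  set G' := Polynomial.aeval p g with hG'
  have hG0 : G.coeff 0 = 0 := by rw [hG, aeval_coeff_zero hp, toP_coeff_zero]
  have hG'0 : G'.coeff 0 = 0 := by rw [hG', aeval_coeff_zero hp, toP_coeff_zero]
  have hG1 : G.coeff 1 = nfCoeff n x 1 * a := by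
    rw [hG, aeval_coeff_one hp, coeff_toP]
  have hG'1 : G'.coeff 1 = nfCoeff n y 1 * a := by
    rw [hG', aeval_coeff_one hp, coeff_toP]
  set W := Polynomial.C (nfCoeff n x 1) * g - Polynomial.C (nfCoeff n y 1) * f with hW
  set Wg := Polynomial.C (nfCoeff n x 1) * G' - Polynomial.C (nfCoeff n y 1) * G with hWg
  -- LHS
  have lhs_eq : phiMap n p (brTP1 n α x y) k
      = (Wg * Polynomial.aeval p (Qp n α)).coeff ((k:ℕ)+1) := by
    rw [phiMap_apply]
    have htoP : toP n (brTP1 n α x y) = toP n (ofP n (W * Qp n α)) := by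
      congr 1
      funext k'
      exact brTP1_coeff n α x y k'
    rw [htoP]
    have step1 : (Polynomial.aeval p (toP n (ofP n (W * Qp n α)))).coeff ((k:ℕ)+1)
        = (Polynomial.aeval p (W * Qp n α)).coeff ((k:ℕ)+1) := by
      apply aeval_coeff_congr hp
      intro j hj
      apply coeff_toP_ofP_of n _ _ j (by omega)
      rw [Polynomial.mul_coeff_zero]
      rw [hW, Polynomial.coeff_sub, Polynomial.coeff_C_mul, Polynomial.coeff_C_mul,
        toP_coeff_zero, toP_coeff_zero]
      ring_nf
    rw [step1, map_mul]
    congr 2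
    rw [hW, map_sub, map_mul, map_mul, Polynomial.aeval_C, Polynomial.aeval_C,
      Polynomial.algebraMap_eq, hWg, hG, hG']
  rw [lhs_eq]
  -- RHS
  rw [brTP1_coeff]
  have hco1 : nfCoeff n (phiMap n p x) 1 = nfCoeff n x 1 * a := by
    rw [← coeff_toP, toP_phiMap_coeff n p hp x 1 (by omega), ← hG, hG1]
  have hco1' : nfCoeff n (phiMap n p y) 1 = nfCoeff n y 1 * a := by
    rw [← coeff_toP, toP_phiMap_coeff n p hp y 1 (by omega), ← hG', hG'1]
  have rhs_eq : ((Polynomial.C (nfCoeff n (phiMap n p x) 1) * toP n (phiMap n p y)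
      - Polynomial.C (nfCoeff n (phiMap n p y) 1) * toP n (phiMap n p x))
        * Qp n α').coeff ((k:ℕ)+1)
      = ((Wg * (Polynomial.C a * Qp n α'))).coeff ((k:ℕ)+1) := by
    have e1 : ∀ j, j ≤ (k:ℕ)+1 →
        (Polynomial.C (nfCoeff n (phiMap n p x) 1) * toP n (phiMap n p y)
          - Polynomial.C (nfCoeff n (phiMap n p y) 1) * toP n (phiMap n p x)).coeff j
        = (Polynomial.C a * Wg).coeff j := by
      intro j hj
      rw [Polynomial.coeff_sub, Polynomial.coeff_C_mul, Polynomial.coeff_C_mul,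
        toP_phiMap_coeff n p hp y j (by omega), toP_phiMap_coeff n p hp x j (by omega),
        hco1, hco1', Polynomial.coeff_C_mul, hWg]
      rw [← hG, ← hG']
      rw [Polynomial.coeff_sub, Polynomial.coeff_C_mul, Polynomial.coeff_C_mul]
      ring
    calc ((Polynomial.C (nfCoeff n (phiMap n p x) 1) * toP n (phiMap n p y)
          - Polynomial.C (nfCoeff n (phiMap n p y) 1) * toP n (phiMap n p x))
            * Qp n α').coeff ((k:ℕ)+1)
        = ((Polynomial.C a * Wg) * Qp n α').coeff ((k:ℕ)+1) :=
          mul_coeff_congr _ e1 (fun _ _ => rfl)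
      _ = ((Wg * (Polynomial.C a * Qp n α'))).coeff ((k:ℕ)+1) := by ring_nf
  rw [rhs_eq]
  -- core
  have hWg0 : Wg.coeff 0 = 0 := by
    rw [hWg, Polynomial.coeff_sub, Polynomial.coeff_C_mul, Polynomial.coeff_C_mul,
      hG0, hG'0]
    ring
  have hWg1 : Wg.coeff 1 = 0 := by
    rw [hWg, Polynomial.coeff_sub, Polynomial.coeff_C_mul, Polynomial.coeff_C_mul,
      hG1, hG'1]
    ring
  exact mul_coeff_congr_right hWg0 hWg1 hk HQ



lemma aeval_Qp (n : ℕ) (α : ℕ → ℂ) (p : Polynomial ℂ) :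
    Polynomial.aeval p (Qp n α)
      = ∑ t ∈ Finset.range (n - 1), Polynomial.C (α (t + 2)) * p ^ t := by
  unfold Qp
  rw [map_sum]
  refine Finset.sum_congr rfl fun t _ => ?_
  rw [map_mul, map_pow, Polynomial.aeval_C, Polynomial.aeval_X, Polynomial.algebraMap_eq]

lemma aeval_Qp_coeff (n : ℕ) (α : ℕ → ℂ) (p : Polynomial ℂ) (d : ℕ) :
    (Polynomial.aeval p (Qp n α)).coeff d
      = ∑ t ∈ Finset.range (n - 1), α (t + 2) * (p ^ t).coeff d := by
  rw [aeval_Qp, Polynomial.finset_sum_coeff]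
  exact Finset.sum_congr rfl fun t _ => Polynomial.coeff_C_mul _

-- perturbation lemma
lemma pert_lt (p : Polynomial ℂ) (hp0 : p.coeff 0 = 0) (c : ℂ) {j : ℕ} (hj : 2 ≤ j)
    {k : ℕ} (hk : 1 ≤ k) {m : ℕ} (hm : m < j + k - 1) :
    ((p + Polynomial.C c * Polynomial.X ^ j) ^ k).coeff m = (p ^ k).coeff m := by
  set q := p + Polynomial.C c * Polynomial.X ^ j with hq
  have hq0 : q.coeff 0 = 0 := by
    rw [hq, Polynomial.coeff_add, Polynomial.coeff_C_mul, Polynomial.coeff_X_pow,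
      if_neg (by omega), mul_zero, add_zero, hp0]
  have key : q ^ k = p ^ k + (Polynomial.C c * ∑ i ∈ Finset.range k,
      q ^ i * p ^ (k - 1 - i)) * Polynomial.X ^ j := by
    have hgeom := geom_sum₂_mul q p k
    have hqp : q - p = Polynomial.C c * Polynomial.X ^ j := by rw [hq]; ring
    have : q ^ k - p ^ k = (∑ i ∈ Finset.range k, q ^ i * p ^ (k - 1 - i))
        * (Polynomial.C c * Polynomial.X ^ j) := by rw [← hqp, hgeom]
    linear_combination this
  rw [key, Polynomial.coeff_add, Polynomial.coeff_mul_X_pow']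
  have hS : ∀ d, d < k - 1 → (∑ i ∈ Finset.range k, q ^ i * p ^ (k - 1 - i)).coeff d = 0 := by
    intro d hd
    rw [Polynomial.finset_sum_coeff]
    apply Finset.sum_eq_zero
    intro i hi
    rw [Finset.mem_range] at hi
    exact mixed_coeff_lt hq0 hp0 (by omega)
  split_ifs with h
  · rw [Polynomial.coeff_C_mul, hS (m - j) (by omega), mul_zero, add_zero]
  · rw [add_zero]

lemma pert_eq (p : Polynomial ℂ) (hp0 : p.coeff 0 = 0) (c : ℂ) {j : ℕ} (hj : 2 ≤ j)
    {k : ℕ} (hk : 1 ≤ k) :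
    ((p + Polynomial.C c * Polynomial.X ^ j) ^ k).coeff (j + k - 1)
      = (p ^ k).coeff (j + k - 1) + k * c * (p.coeff 1) ^ (k - 1) := by
  set q := p + Polynomial.C c * Polynomial.X ^ j with hq
  have hq0 : q.coeff 0 = 0 := by
    rw [hq, Polynomial.coeff_add, Polynomial.coeff_C_mul, Polynomial.coeff_X_pow,
      if_neg (by omega), mul_zero, add_zero, hp0]
  have hq1 : q.coeff 1 = p.coeff 1 := by
    rw [hq, Polynomial.coeff_add, Polynomial.coeff_C_mul, Polynomial.coeff_X_pow,
      if_neg (by omega), mul_zero, add_zero]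
  have key : q ^ k = p ^ k + (Polynomial.C c * ∑ i ∈ Finset.range k,
      q ^ i * p ^ (k - 1 - i)) * Polynomial.X ^ j := by
    have hgeom := geom_sum₂_mul q p k
    have hqp : q - p = Polynomial.C c * Polynomial.X ^ j := by rw [hq]; ring
    have : q ^ k - p ^ k = (∑ i ∈ Finset.range k, q ^ i * p ^ (k - 1 - i))
        * (Polynomial.C c * Polynomial.X ^ j) := by rw [← hqp, hgeom]
    linear_combination this
  rw [key, Polynomial.coeff_add, Polynomial.coeff_mul_X_pow', if_pos (by omega)]
  have hsub : j + k - 1 - j = k - 1 := by omega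
  rw [hsub, Polynomial.coeff_C_mul, Polynomial.finset_sum_coeff]
  have hterm : ∀ i ∈ Finset.range k,
      (q ^ i * p ^ (k - 1 - i)).coeff (k - 1) = (p.coeff 1) ^ (k - 1) := by
    intro i hi
    rw [Finset.mem_range] at hi
    obtain ⟨l, hl⟩ : ∃ l, k - 1 - i = l := ⟨_, rfl⟩
    rw [hl]
    have h' : k - 1 = i + l := by omega
    rw [h', mixed_coeff_self hq0 hp0, hq1, ← pow_add]
  rw [Finset.sum_congr rfl hterm, Finset.sum_const, Finset.card_range, nsmul_eq_mul]
  ring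

-- the inductive construction
lemma exists_p (n s : ℕ) (hn : 5 ≤ n) (hs1 : 3 ≤ s) (hs2 : s ≤ n) (α : ℕ → ℂ)
    (h2 : α 2 ≠ 0) (h0 : ∀ t, 3 ≤ t → t < s → α t = 0) (hs : α s ≠ 0) :
    ∃ p : Polynomial ℂ, p.coeff 0 = 0 ∧ p.coeff 1 = α 2 ∧
      ∀ m, m ≤ n - 2 → (Polynomial.aeval p (Qp n α)).coeff m
        = (if m = 0 then α 2 else if m = s - 2 then α 2 * (α s * α 2 ^ (s - 3)) else 0) := by
  have hK : ((s : ℂ) - 2) * α s * α 2 ^ (s - 3) ≠ 0 := by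
    apply mul_ne_zero (mul_ne_zero ?_ hs) (pow_ne_zero _ h2)
    have : ((s : ℂ) - 2) = ((s - 2 : ℕ) : ℂ) := by
      push_cast [Nat.cast_sub (by omega : 2 ≤ s)]; ring
    rw [this]
    exact Nat.cast_ne_zero.mpr (by omega : s - 2 ≠ 0)
  have main : ∀ r : ℕ, ∃ p : Polynomial ℂ, p.coeff 0 = 0 ∧ p.coeff 1 = α 2 ∧
      ∀ m, m ≤ s - 2 + r → m ≤ n - 2 → (Polynomial.aeval p (Qp n α)).coeff m
        = (if m = 0 then α 2 else if m = s - 2 then α 2 * (α s * α 2 ^ (s - 3)) else 0) := by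
    intro r
    induction r with
    | zero =>
      refine ⟨Polynomial.C (α 2) * Polynomial.X, by simp, by simp, ?_⟩
      intro m hm hm2
      rw [aeval_Qp_coeff]
      have hterm : ∀ t ∈ Finset.range (n - 1),
          α (t + 2) * ((Polynomial.C (α 2) * Polynomial.X) ^ t).coeff m
            = if t = m then α (t + 2) * α 2 ^ t else 0 := by
        intro t _
        rw [mul_pow, ← Polynomial.C_pow, Polynomial.coeff_C_mul, Polynomial.coeff_X_pow]
        by_cases h : t = m
        · rw [if_pos h, if_pos h.symm, mul_one]
        · rw [if_neg h, if_neg (Ne.symm h), mul_zero, mul_zero]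
      rw [Finset.sum_congr rfl hterm]
      rw [Finset.sum_ite_eq' (Finset.range (n - 1)) m (fun t => α (t + 2) * α 2 ^ t)]
      rw [if_pos (Finset.mem_range.mpr (by omega))]
      rcases Nat.eq_zero_or_pos m with rfl | hm1
      · simp
      · rw [if_neg (by omega)]
        by_cases hms : m = s - 2
        · rw [if_pos hms, hms]
          have h1 : s - 2 + 2 = s := by omega
          have h2' : s - 2 = s - 3 + 1 := by omega
          rw [h1, h2', pow_succ]
          ring
        · rw [if_neg hms, h0 (m + 2) (by omega) (by omega), zero_mul]
    | succ r ih =>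
      obtain ⟨p, hp0, hp1, hcoeff⟩ := ih
      by_cases hbound : s - 2 + (r + 1) ≤ n - 2
      case neg =>
        exact ⟨p, hp0, hp1, fun m hm hm2 => hcoeff m (by omega) hm2⟩
      case pos =>
        set d := s - 2 + (r + 1) with hd
        set j := d + 3 - s with hj
        have hj2 : 2 ≤ j := by omega
        have hjd : j + (s - 2) - 1 = d := by omega
        set c := -(Polynomial.aeval p (Qp n α)).coeff d
          / (((s : ℂ) - 2) * α s * α 2 ^ (s - 3)) with hc
        set p' := p + Polynomial.C c * Polynomial.X ^ j with hp'
        have hp'0 : p'.coeff 0 = 0 := by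
          rw [hp', Polynomial.coeff_add, Polynomial.coeff_C_mul, Polynomial.coeff_X_pow,
            if_neg (by omega), mul_zero, add_zero, hp0]
        have hp'1 : p'.coeff 1 = α 2 := by
          rw [hp', Polynomial.coeff_add, Polynomial.coeff_C_mul, Polynomial.coeff_X_pow,
            if_neg (by omega), mul_zero, add_zero, hp1]
        refine ⟨p', hp'0, hp'1, ?_⟩
        have hsn : s - 2 ∈ Finset.range (n - 1) := Finset.mem_range.mpr (by omega)
        have diff : ∀ m ≤ d, (Polynomial.aeval p' (Qp n α)).coeff m
            = (Polynomial.aeval p (Qp n α)).coeff m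
              + (if m = d then α s * (((s - 2 : ℕ) : ℂ) * c * α 2 ^ (s - 3)) else 0) := by
          intro m hm
          rw [aeval_Qp_coeff, aeval_Qp_coeff]
          have hterm : ∀ t ∈ Finset.range (n - 1),
              α (t + 2) * (p' ^ t).coeff m
                = α (t + 2) * (p ^ t).coeff m
                  + (if t = s - 2 then
                      (if m = d then α s * (((s - 2 : ℕ) : ℂ) * c * α 2 ^ (s - 3)) else 0)
                     else 0) := by
            intro t _
            rcases Nat.eq_zero_or_pos t with rfl | ht1
            · rw [if_neg (by omega), add_zero, pow_zero, pow_zero]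
            · by_cases hts : t ≤ s - 3
              · rw [if_neg (by omega), add_zero]
                rw [h0 (t + 2) (by omega) (by omega), zero_mul, zero_mul]
              · -- t ≥ s - 2
                have hts2 : s - 2 ≤ t := by omega
                by_cases hmd : m < j + t - 1
                · rw [hp', pert_lt p hp0 c hj2 ht1 hmd]
                  have hz : (if t = s - 2 then
                      (if m = d then α s * (((s - 2 : ℕ) : ℂ) * c * α 2 ^ (s - 3)) else 0)
                     else 0) = 0 := by
                    split_ifs with h1' h2'
                    · exfalso; omega
                    · rfl
                    · rfl
                  rw [hz, add_zero]
                · have hmeq : m = j + t - 1 := by omega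
                  have htse : t = s - 2 := by omega
                  have hmde : m = d := by omega
                  rw [hp', hmeq, pert_eq p hp0 c hj2 ht1, hp1]
                  rw [if_pos htse, if_pos (by omega), htse]
                  have harg : s - 2 + 2 = s := by omega
                  rw [harg]
                  have hexp : t - 1 = s - 3 := by omega
                  rw [← htse, hexp]
                  ring
          rw [Finset.sum_congr rfl hterm, Finset.sum_add_distrib]
          congr 1
          rw [Finset.sum_ite_eq' (Finset.range (n - 1)) (s - 2)
            (fun _ => (if m = d then α s * (((s - 2 : ℕ) : ℂ) * c * α 2 ^ (s - 3)) else 0))]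
          rw [if_pos hsn]
        intro m hm hm2
        by_cases hmd : m = d
        · rw [hmd, diff d le_rfl, if_pos rfl]
          have hcast : ((s - 2 : ℕ) : ℂ) = (s : ℂ) - 2 := by
            push_cast [Nat.cast_sub (by omega : 2 ≤ s)]; ring
          rw [hcast, hc]
          rw [if_neg (by omega), if_neg (by omega)]
          have hs2ne : (s : ℂ) - 2 ≠ 0 := left_ne_zero_of_mul (left_ne_zero_of_mul hK)
          field_simp
          ring
        · rw [diff m (by omega), if_neg hmd, add_zero]
          exact hcoeff m (by omega) hm2
  obtain ⟨p, hp0, hp1, hcoeff⟩ := main (n - 2)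
  exact ⟨p, hp0, hp1, fun m hm => hcoeff m (by omega) hm⟩

end Aux13

/-- for `n ≥ 5`, `3 ≤ s ≤ n`, `α₂ ≠ 0`, `α₃ = … = α_{s-1} = 0`
and `αₛ ≠ 0`, `TP₁(α₂,0,…,0,αₛ,…,αₙ)` is isomorphic to
`TP₁(1,0,…,0,α,0,…,0)` for some nonzero `α` in position `s`. -/
theorem stmt_13 (n : ℕ) (hn : 5 ≤ n) (s : ℕ) (hs1 : 3 ≤ s) (hs2 : s ≤ n)
    (α : ℕ → ℂ) (h2 : α 2 ≠ 0) (h0 : ∀ t, 3 ≤ t → t < s → α t = 0)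
    (hs : α s ≠ 0) :
    ∃ β : ℂ, β ≠ 0 ∧
      TPIso n (brTP1 n α)
        (brTP1 n fun t => if t = 2 then 1 else if t = s then β else 0) := by
  classical
  obtain ⟨p, hp0, hp1, hco⟩ := exists_p n s hn hs1 hs2 α h2 h0 hs
  refine ⟨α s * α 2 ^ (s - 3), mul_ne_zero hs (pow_ne_zero _ h2), ?_⟩
  set β : ℂ := α s * α 2 ^ (s - 3) with hβdef
  set α' : ℕ → ℂ := fun t => if t = 2 then 1 else if t = s then β else 0 with hα'
  have hp1' : p.coeff 1 ≠ 0 := by rw [hp1]; exact h2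
  have HQ : ∀ m, m + 2 ≤ n →
      (Polynomial.aeval p (Qp n α)).coeff m
        = (Polynomial.C (p.coeff 1) * Qp n α').coeff m := by
    intro m hm
    rw [Polynomial.coeff_C_mul, Qp_coeff, if_pos (by omega), hp1]
    rw [hco m (by omega)]
    have hα'm : α' (m + 2) = (if m = 0 then 1 else if m = s - 2 then β else 0) := by
      show (if m + 2 = 2 then (1:ℂ) else if m + 2 = s then β else 0)
        = (if m = 0 then 1 else if m = s - 2 then β else 0)
      by_cases hm0 : m = 0
      · rw [if_pos (by omega), if_pos hm0]
      · rw [if_neg (by omega), if_neg hm0]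
        by_cases hms : m = s - 2
        · rw [if_pos (by omega), if_pos hms]
        · rw [if_neg (by omega), if_neg hms]
    rw [hα'm]
    by_cases hm0 : m = 0
    · rw [if_pos hm0, if_pos hm0, mul_one]
    · rw [if_neg hm0, if_neg hm0]
      by_cases hms : m = s - 2
      · rw [if_pos hms, if_pos hms]
      · rw [if_neg hms, if_neg hms, mul_zero]
  unfold TPIso
  refine ⟨phiEquiv n p hp0 hp1', ?_, ?_⟩
  · intro x y
    show phiMap n p (nfMul n x y) = nfMul n (phiMap n p x) (phiMap n p y)
    exact phi_mul n p hp0 x y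
  · intro x y
    show phiMap n p (brTP1 n α x y) = brTP1 n α' (phiMap n p x) (phiMap n p y)
    exact phi_br n p hp0 α α' HQ x y
end

section
/- Let n ≥ 5 and α₃,…,αₙ ∈ ℂ with α₃ ≠ 0. Then the transposed 1-Poisson algebra TP₁(0,α₃,…,αₙ) is isomorphic to TP₁(0,α₃,0,…,0), i.e., to the structure on μ₀ⁿ with [e₁,eᵢ] = α₃ e_{i+1} for 2 ≤ i ≤ n−1 and all other basis brackets zero. -/
open Finset

namespace Stmt14
variable {n : ℕ}

/-- collapse a Fin-sum with a ℕ-equality condition -/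
lemma fin_collapse {M : Type*} [AddCommMonoid M] (f : Fin n → M) (m : ℕ) :
    (∑ k : Fin n, if (k : ℕ) = m then f k else 0) = if h : m < n then f ⟨m, h⟩ else 0 := by
  split
  · next h =>
    rw [Finset.sum_eq_single (⟨m, h⟩ : Fin n)]
    · simp
    · intro b _ hb
      simp only [ite_eq_right_iff]
      intro hbm; exact absurd (Fin.ext hbm) hb
    · simp
  · next h =>
    apply Finset.sum_eq_zero
    intro k _
    have : (k : ℕ) ≠ m := by omega
    simp [this]

lemma nfMul_add_left (x y z : Fin n → ℂ) :
    nfMul n (x + y) z = nfMul n x z + nfMul n y z := by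
  funext k
  simp only [nfMul, Pi.add_apply, ← Finset.sum_add_distrib]
  refine Finset.sum_congr rfl fun i _ => Finset.sum_congr rfl fun j _ => ?_
  split <;> ring

lemma nfMul_smul_left (c : ℂ) (x z : Fin n → ℂ) :
    nfMul n (c • x) z = c • nfMul n x z := by
  funext k
  simp only [nfMul, Pi.smul_apply, smul_eq_mul, Finset.mul_sum]
  refine Finset.sum_congr rfl fun i _ => Finset.sum_congr rfl fun j _ => ?_
  split <;> ring

lemma nfMul_comm (x y : Fin n → ℂ) : nfMul n x y = nfMul n y x := by
  funext k
  rw [nfMul, nfMul, Finset.sum_comm]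
  refine Finset.sum_congr rfl fun i _ => Finset.sum_congr rfl fun j _ => ?_
  rw [show (i:ℕ) + j + 1 = j + i + 1 by ring]
  split <;> ring

lemma nfMul_add_right (x y z : Fin n → ℂ) :
    nfMul n x (y + z) = nfMul n x y + nfMul n x z := by
  rw [nfMul_comm, nfMul_add_left, nfMul_comm y x, nfMul_comm z x]

lemma nfMul_smul_right (c : ℂ) (x z : Fin n → ℂ) :
    nfMul n x (c • z) = c • nfMul n x z := by
  rw [nfMul_comm, nfMul_smul_left, nfMul_comm z x]

lemma nfMul_zero_left (z : Fin n → ℂ) : nfMul n 0 z = 0 := by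
  funext k; simp [nfMul]

noncomputable def nfMulL : (Fin n → ℂ) →ₗ[ℂ] (Fin n → ℂ) →ₗ[ℂ] (Fin n → ℂ) where
  toFun x := { toFun := nfMul n x
               map_add' := fun y z => nfMul_add_right x y z
               map_smul' := fun c y => nfMul_smul_right c x y }
  map_add' x y := LinearMap.ext fun z => nfMul_add_left x y z
  map_smul' c x := LinearMap.ext fun z => nfMul_smul_left c x z

@[simp] lemma nfMulL_apply (x y : Fin n → ℂ) : nfMulL x y = nfMul n x y := rfl

end Stmt14

namespace Stmt14
variable {n : ℕ}

lemma ite_sum {β : Type*} {c : Prop} [Decidable c] {s : Finset β} (f : β → ℂ) :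
    (if c then ∑ x ∈ s, f x else 0) = ∑ x ∈ s, if c then f x else 0 := by
  split <;> simp

lemma nfMul_assoc (x y z : Fin n → ℂ) :
    nfMul n (nfMul n x y) z = nfMul n x (nfMul n y z) := by
  funext k
  have hL : nfMul n (nfMul n x y) z k
      = ∑ j : Fin n, ∑ p : Fin n, ∑ q : Fin n,
          if (p:ℕ)+(q:ℕ)+(j:ℕ)+2 = (k:ℕ) then x p * y q * z j else 0 := by
    rw [nfMul]
    simp only [nfMul, Finset.sum_mul, ite_mul, zero_mul, ite_sum]
    rw [Finset.sum_comm]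
    refine Finset.sum_congr rfl fun j _ => ?_
    rw [Finset.sum_comm]
    refine Finset.sum_congr rfl fun p _ => ?_
    rw [Finset.sum_comm]
    refine Finset.sum_congr rfl fun q _ => ?_
    have key : ∀ i : Fin n,
        (if (i:ℕ)+(j:ℕ)+1=(k:ℕ) then if (p:ℕ)+(q:ℕ)+1=(i:ℕ) then x p * y q * z j else 0 else 0)
        = if (i:ℕ) = (p:ℕ)+(q:ℕ)+1 then
            (if (p:ℕ)+(q:ℕ)+(j:ℕ)+2=(k:ℕ) then x p * y q * z j else 0) else 0 := by
      intro i
      by_cases h : (i:ℕ) = (p:ℕ)+(q:ℕ)+1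
      · by_cases hk : (p:ℕ)+(q:ℕ)+(j:ℕ)+2 = (k:ℕ)
        · have h1 : (i:ℕ)+(j:ℕ)+1 = (k:ℕ) := by omega
          simp [h, hk, h1]
          all_goals (intro hc; exfalso; omega)
        · have h1 : ¬((i:ℕ)+(j:ℕ)+1 = (k:ℕ)) := by omega
          simp [h, hk, h1]
          all_goals (intro hc; exfalso; omega)
      · have h1 : ¬((p:ℕ)+(q:ℕ)+1 = (i:ℕ)) := by omega
        simp [h, h1]
    rw [Finset.sum_congr rfl fun i _ => key i, fin_collapse]
    split
    · rfl
    · next hlt =>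
      have hk := k.isLt
      have : ¬((p:ℕ)+(q:ℕ)+(j:ℕ)+2 = (k:ℕ)) := by omega
      simp [this]
  have hR : nfMul n x (nfMul n y z) k
      = ∑ p : Fin n, ∑ q : Fin n, ∑ j : Fin n,
          if (p:ℕ)+(q:ℕ)+(j:ℕ)+2 = (k:ℕ) then x p * (y q * z j) else 0 := by
    rw [nfMul]
    simp only [nfMul, Finset.mul_sum, mul_ite, mul_zero, ite_sum]
    refine Finset.sum_congr rfl fun p _ => ?_
    rw [Finset.sum_comm]
    refine Finset.sum_congr rfl fun q _ => ?_
    rw [Finset.sum_comm]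
    refine Finset.sum_congr rfl fun j _ => ?_
    have key : ∀ i : Fin n,
        (if (p:ℕ)+(i:ℕ)+1=(k:ℕ) then if (q:ℕ)+(j:ℕ)+1=(i:ℕ) then x p * (y q * z j) else 0 else 0)
        = if (i:ℕ) = (q:ℕ)+(j:ℕ)+1 then
            (if (p:ℕ)+(q:ℕ)+(j:ℕ)+2=(k:ℕ) then x p * (y q * z j) else 0) else 0 := by
      intro i
      by_cases h : (i:ℕ) = (q:ℕ)+(j:ℕ)+1
      · by_cases hk : (p:ℕ)+(q:ℕ)+(j:ℕ)+2 = (k:ℕ)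
        · have h1 : (p:ℕ)+(i:ℕ)+1 = (k:ℕ) := by omega
          simp [h, hk, h1]
          all_goals (intro hc; exfalso; omega)
        · have h1 : ¬((p:ℕ)+(i:ℕ)+1 = (k:ℕ)) := by omega
          simp [h, hk, h1]
          all_goals (intro hc; exfalso; omega)
      · have h1 : ¬((q:ℕ)+(j:ℕ)+1 = (i:ℕ)) := by omega
        simp [h, h1]
    rw [Finset.sum_congr rfl fun i _ => key i, fin_collapse]
    split
    · rfl
    · next hlt =>
      have hk := k.isLt
      have : ¬((p:ℕ)+(q:ℕ)+(j:ℕ)+2 = (k:ℕ)) := by omega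
      simp [this]
  rw [hL, hR, Finset.sum_comm]
  refine Finset.sum_congr rfl fun p _ => ?_
  rw [Finset.sum_comm]
  refine Finset.sum_congr rfl fun q _ => Finset.sum_congr rfl fun j _ => ?_
  rw [mul_assoc]

end Stmt14

namespace Stmt14
variable {n : ℕ}

/-- `x` has no components below `e_m` (1-based). -/
def lowZero (m : ℕ) (x : Fin n → ℂ) : Prop := ∀ k : Fin n, (k:ℕ) + 1 < m → x k = 0

lemma lowZero_one (x : Fin n → ℂ) : lowZero 1 x := fun k hk => by omega

lemma lowZero_mono {m m' : ℕ} (h : m' ≤ m) {x : Fin n → ℂ} (hx : lowZero m x) :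
    lowZero m' x := fun k hk => hx k (by omega)

lemma nfMul_lowZero {i j : ℕ} {x y : Fin n → ℂ} (hx : lowZero i x) (hy : lowZero j y) :
    lowZero (i + j) (nfMul n x y) := by
  intro k hk
  rw [nfMul]
  refine Finset.sum_eq_zero fun p _ => Finset.sum_eq_zero fun q _ => ?_
  split
  · next h =>
    by_cases hp : (p:ℕ) + 1 < i
    · rw [hx p hp, zero_mul]
    · rw [hy q (by omega), mul_zero]
  · rfl

lemma nfMul_eq_zero_of_high {m : ℕ} {x : Fin n → ℂ} (hm : n < m) (hx : lowZero m x) : x = 0 := by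
  funext k
  exact hx k (by omega)

lemma nfCoeff_eq {i : ℕ} (hi : 1 ≤ i) (hin : i ≤ n) (x : Fin n → ℂ) :
    nfCoeff n x i = x ⟨i - 1, by omega⟩ := by
  rw [nfCoeff]
  rw [Finset.sum_eq_single (⟨i - 1, by omega⟩ : Fin n)]
  · simp [Nat.sub_add_cancel hi]
  · intro b _ hb
    have : (b:ℕ) + 1 ≠ i := fun h => hb (Fin.ext (show (b:ℕ) = i - 1 by omega))
    simp [this]
  · simp

lemma nfCoeff_of_lowZero {m i : ℕ} {x : Fin n → ℂ} (hx : lowZero m x) (hi : i < m) :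
    nfCoeff n x i = 0 := by
  rw [nfCoeff]
  refine Finset.sum_eq_zero fun k _ => ?_
  split
  · next h => exact hx k (by omega)
  · rfl

/-- diagonal coefficient of a product of two vectors with valuations `i`, `j`. -/
lemma nfMul_diag {i j : ℕ} {x y : Fin n → ℂ} (hx : lowZero i x) (hy : lowZero j y)
    (hi : 1 ≤ i) (hj : 1 ≤ j) (k : Fin n) (hk : (k:ℕ) + 1 = i + j) :
    nfMul n x y k = nfCoeff n x i * nfCoeff n y j := by
  have hkn := k.isLt
  have hin : i ≤ n := by omega
  have hjn : j ≤ n := by omega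
  rw [nfMul, nfCoeff_eq hi hin, nfCoeff_eq hj hjn]
  rw [Finset.sum_eq_single (⟨i - 1, by omega⟩ : Fin n)]
  · rw [Finset.sum_eq_single (⟨j - 1, by omega⟩ : Fin n)]
    · have hcond : i - 1 + (j - 1) + 1 = (k:ℕ) := by omega
      simp [hcond]
    · intro q _ hq
      split
      · next h =>
        have : (q:ℕ) + 1 < j ∨ i - 1 + 1 < i := by
          simp at h
          rcases Nat.lt_or_ge ((q:ℕ)+1) j with h'|h'
          · exact Or.inl h'
          · exfalso
            have : (q:ℕ) = j - 1 := by omega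
            exact hq (Fin.ext this)
        rcases this with h'|h'
        · rw [hy q h', mul_zero]
        · omega
      · rfl
    · simp
  · intro p _ hp
    refine Finset.sum_eq_zero fun q _ => ?_
    split
    · next h =>
      by_cases hpi : (p:ℕ) + 1 < i
      · rw [hx p hpi, zero_mul]
      · have : (q:ℕ) + 1 < j ∨ (p:ℕ) = i - 1 := by omega
        rcases this with h'|h'
        · rw [hy q h', mul_zero]
        · exact absurd (Fin.ext h') hp
    · rfl
  · simp

end Stmt14

namespace Stmt14
variable {n : ℕ}

noncomputable def pw (c : Fin n → ℂ) : ℕ → (Fin n → ℂ)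
  | 0 => 0
  | 1 => c
  | (m+2) => nfMul n c (pw c (m+1))

lemma pw_succ (c : Fin n → ℂ) {m : ℕ} (hm : 1 ≤ m) :
    pw c (m+1) = nfMul n c (pw c m) := by
  match m, hm with
  | (m+1), _ => rfl

lemma pw_lowZero (c : Fin n → ℂ) {m : ℕ} (hm : 1 ≤ m) : lowZero m (pw c m) := by
  induction m, hm using Nat.le_induction with
  | base => exact lowZero_one c
  | succ m hm ih =>
    rw [pw_succ c hm]
    have := nfMul_lowZero (lowZero_one c) ih
    rwa [add_comm] at this

lemma pw_high (c : Fin n → ℂ) {m : ℕ} (hm : n < m) : pw c m = 0 := by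
  cases m with
  | zero => rfl
  | succ m =>
    exact nfMul_eq_zero_of_high hm (pw_lowZero c (by omega))

lemma pw_mul (c : Fin n → ℂ) {i j : ℕ} (hi : 1 ≤ i) (hj : 1 ≤ j) :
    nfMul n (pw c i) (pw c j) = pw c (i + j) := by
  induction i, hi using Nat.le_induction with
  | base => rw [show 1 + j = j + 1 by ring, pw_succ c hj]; rfl
  | succ i hi ih =>
    rw [show i+1+j = i+j+1 by ring, pw_succ c (by omega : 1 ≤ i+j),
      pw_succ c hi, nfMul_assoc, ih]

lemma pw_diag (c : Fin n → ℂ) (hc1 : ∀ k : Fin n, (k:ℕ) = 0 → c k = 1)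
    {m : ℕ} (hm : 1 ≤ m) (k : Fin n) (hk : (k:ℕ) + 1 = m) : pw c m k = 1 := by
  induction m, hm using Nat.le_induction generalizing k with
  | base => exact hc1 k (by omega)
  | succ m hm ih =>
    have hkn := k.isLt
    have hmn : m < n := by omega
    rw [pw_succ c hm,
      nfMul_diag (lowZero_one c) (pw_lowZero c hm) le_rfl hm k (by omega),
      nfCoeff_eq le_rfl (by omega), nfCoeff_eq hm (by omega)]
    rw [hc1 _ (by simp), ih ⟨m-1, by omega⟩ (by simp; omega), one_mul]

end Stmt14

namespace Stmt14
variable {n : ℕ}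

lemma nfE_high {t : ℕ} (ht : n < t) : nfE n t = 0 := by
  funext k
  have := k.isLt
  have : (k:ℕ) + 1 ≠ t := by omega
  simp [nfE, this]

lemma nfE_mul {i j : ℕ} (hi : 1 ≤ i) (hj : 1 ≤ j) :
    nfMul n (nfE n i) (nfE n j) = nfE n (i + j) := by
  funext k
  have hkn := k.isLt
  rw [nfMul]
  have key : ∀ p q : Fin n,
      (if (p:ℕ)+(q:ℕ)+1 = (k:ℕ) then nfE n i p * nfE n j q else 0)
      = if (q:ℕ) = j - 1 then (if (p:ℕ) = i - 1 then
          (if (k:ℕ)+1 = i+j then 1 else 0) else 0) else 0 := by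
    intro p q
    by_cases hp : (p:ℕ) = i - 1
    · by_cases hq : (q:ℕ) = j - 1
      · have h1 : nfE n i p = 1 := by simp [nfE]; omega
        have h2 : nfE n j q = 1 := by simp [nfE]; omega
        by_cases hk : (k:ℕ)+1 = i+j
        · have hpq : (p:ℕ)+(q:ℕ)+1 = (k:ℕ) := by omega
          simp [hpq, h1, h2, hp, hq, hk]
          all_goals first | omega | (intro hc; exfalso; omega)
        · have hpq : ¬((p:ℕ)+(q:ℕ)+1 = (k:ℕ)) := by omega
          simp [hpq, hp, hq, hk]
          all_goals first | omega | (intro hc; exfalso; omega)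
      · have h2 : nfE n j q = 0 := by simp [nfE]; omega
        simp [h2, hp, hq]
    · have h1 : nfE n i p = 0 := by simp [nfE]; omega
      by_cases hq : (q:ℕ) = j - 1
      · simp [h1, hp, hq]
      · simp [h1, hp, hq]
  rw [Finset.sum_congr rfl fun p _ => Finset.sum_congr rfl fun q _ => key p q]
  rw [Finset.sum_congr rfl fun p _ => fin_collapse _ (j-1)]
  by_cases hjn : j - 1 < n
  · simp only [hjn, dif_pos]
    rw [fin_collapse _ (i-1)]
    by_cases hin : i - 1 < n
    · simp [hin, nfE]
    · have hk : ¬((k:ℕ)+1 = i+j) := by omega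
      simp [hin, hk, nfE]
  · have hk : ¬((k:ℕ)+1 = i+j) := by omega
    simp [hjn, hk, nfE]

lemma decomp (x : Fin n → ℂ) : x = ∑ i : Fin n, x i • nfE n ((i:ℕ)+1) := by
  funext k
  rw [Finset.sum_apply]
  have key : ∀ i : Fin n, (x i • nfE n ((i:ℕ)+1)) k = if (i:ℕ) = (k:ℕ) then x i else 0 := by
    intro i
    by_cases h : (i:ℕ) = (k:ℕ)
    · simp [nfE, h]
    · have : ¬((k:ℕ)+1 = (i:ℕ)+1) := by omega
      simp [nfE, h, this]
      intro hc; omega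
  rw [Finset.sum_congr rfl fun i _ => key i, fin_collapse x (k:ℕ)]
  simp

lemma sum_fin_icc {M : Type*} [AddCommMonoid M] (f : ℕ → M) :
    ∑ i : Fin n, f ((i:ℕ)+1) = ∑ i ∈ Finset.Icc 1 n, f i := by
  rw [Fin.sum_univ_eq_sum_range (fun m => f (m+1)) n]
  refine Finset.sum_nbij' (fun i => i + 1) (fun t => t - 1) ?_ ?_ ?_ ?_ ?_ <;>
    intros a ha <;> simp_all [Finset.mem_range, Finset.mem_Icc] <;> omega

lemma decomp' (x : Fin n → ℂ) : x = ∑ i ∈ Finset.Icc 1 n, nfCoeff n x i • nfE n i := by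
  conv_lhs => rw [decomp x]
  rw [← sum_fin_icc (fun i => nfCoeff n x i • nfE n i)]
  refine Finset.sum_congr rfl fun i _ => ?_
  have h : nfCoeff n x ((i:ℕ)+1) = x i := by
    rw [nfCoeff_eq (by omega) i.isLt x]
    simp
  rw [h]

end Stmt14

namespace Stmt14
variable {n : ℕ}

lemma nfMul_sum_left {β : Type*} (s : Finset β) (f : β → Fin n → ℂ) (y : Fin n → ℂ) :
    nfMul n (∑ b ∈ s, f b) y = ∑ b ∈ s, nfMul n (f b) y :=
  map_sum ((nfMulL (n := n)).flip y) f s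

lemma nfMul_sum_right {β : Type*} (s : Finset β) (f : β → Fin n → ℂ) (x : Fin n → ℂ) :
    nfMul n x (∑ b ∈ s, f b) = ∑ b ∈ s, nfMul n x (f b) :=
  map_sum (nfMulL (n := n) x) f s

noncomputable def psi (c : Fin n → ℂ) : (Fin n → ℂ) →ₗ[ℂ] (Fin n → ℂ) where
  toFun x := ∑ i : Fin n, x i • pw c ((i:ℕ)+1)
  map_add' x y := by
    simp only [Pi.add_apply, add_smul, Finset.sum_add_distrib]
  map_smul' t x := by
    simp only [Pi.smul_apply, smul_eq_mul, RingHom.id_apply, Finset.smul_sum, smul_smul]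

lemma psi_apply (c : Fin n → ℂ) (x : Fin n → ℂ) :
    psi c x = ∑ i : Fin n, x i • pw c ((i:ℕ)+1) := rfl

lemma psi_mul (c : Fin n → ℂ) (x y : Fin n → ℂ) :
    psi c (nfMul n x y) = nfMul n (psi c x) (psi c y) := by
  rw [psi_apply, psi_apply, psi_apply, nfMul_sum_left]
  have hR : ∀ i : Fin n, nfMul n (x i • pw c ((i:ℕ)+1)) (∑ j : Fin n, y j • pw c ((j:ℕ)+1))
      = ∑ j : Fin n, (x i * y j) • pw c ((i:ℕ)+(j:ℕ)+2) := by
    intro i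
    rw [nfMul_sum_right]
    refine Finset.sum_congr rfl fun j _ => ?_
    rw [nfMul_smul_left, nfMul_smul_right, pw_mul c (by omega) (by omega), smul_smul]
    rw [show (i:ℕ)+1+((j:ℕ)+1) = (i:ℕ)+(j:ℕ)+2 by ring]
  rw [Finset.sum_congr rfl fun i _ => hR i]
  have hL : ∀ i : Fin n, (nfMul n x y i) • pw c ((i:ℕ)+1)
      = ∑ p : Fin n, ∑ q : Fin n,
          if (p:ℕ)+(q:ℕ)+1 = (i:ℕ) then (x p * y q) • pw c ((i:ℕ)+1) else 0 := by
    intro i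
    rw [nfMul]
    simp only [Finset.sum_smul, ite_smul, zero_smul]
  rw [Finset.sum_congr rfl fun i _ => hL i]
  rw [Finset.sum_comm]
  refine Finset.sum_congr rfl fun p _ => ?_
  rw [Finset.sum_comm]
  refine Finset.sum_congr rfl fun q _ => ?_
  have key : ∀ i : Fin n,
      (if (p:ℕ)+(q:ℕ)+1 = (i:ℕ) then (x p * y q) • pw c ((i:ℕ)+1) else 0)
      = if (i:ℕ) = (p:ℕ)+(q:ℕ)+1 then (x p * y q) • pw c ((i:ℕ)+1) else 0 := by
    intro i
    by_cases h : (i:ℕ) = (p:ℕ)+(q:ℕ)+1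
    · simp [h]
    · have h' : ¬((p:ℕ)+(q:ℕ)+1 = (i:ℕ)) := fun hh => h hh.symm
      simp [h, h']
  rw [Finset.sum_congr rfl fun i _ => key i,
    fin_collapse (fun i : Fin n => (x p * y q) • pw c ((i:ℕ)+1)) ((p:ℕ)+(q:ℕ)+1)]
  split
  · rfl
  · next h =>
    rw [pw_high c (by omega), smul_zero]

lemma psi_nfE1 (c : Fin n → ℂ) (hn : 0 < n) : psi c (nfE n 1) = c := by
  rw [psi_apply]
  have key : ∀ i : Fin n, nfE n 1 i • pw c ((i:ℕ)+1)
      = if (i:ℕ) = 0 then pw c ((i:ℕ)+1) else 0 := by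
    intro i
    by_cases h : (i:ℕ) = 0
    · simp [nfE, h]
    · have : ¬((i:ℕ)+1 = 1) := by omega
      simp [nfE, h, this]
  rw [Finset.sum_congr rfl fun i _ => key i, fin_collapse _ 0, dif_pos hn]
  rfl

lemma psi_coeff1 (c : Fin n → ℂ) (hc1 : ∀ k : Fin n, (k:ℕ) = 0 → c k = 1)
    (hn : 0 < n) (x : Fin n → ℂ) : nfCoeff n (psi c x) 1 = nfCoeff n x 1 := by
  rw [nfCoeff_eq le_rfl hn, nfCoeff_eq le_rfl hn, psi_apply, Finset.sum_apply]
  rw [Finset.sum_eq_single (⟨0, hn⟩ : Fin n)]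
  · have h1 : pw c (((⟨0, hn⟩ : Fin n):ℕ)+1) ⟨0, hn⟩ = 1 := hc1 ⟨0, hn⟩ rfl
    simp only [Pi.smul_apply, smul_eq_mul, h1, mul_one]
  · intro b _ hb
    have hbpos : 0 < (b:ℕ) := by
      rcases Nat.eq_zero_or_pos (b:ℕ) with h|h
      · exact absurd (Fin.ext (by simp [h])) hb
      · exact h
    simp only [Pi.smul_apply, smul_eq_mul]
    rw [pw_lowZero c (by omega) ⟨0, hn⟩ (by simp; omega), mul_zero]
  · simp

end Stmt14

namespace Stmt14
variable {n : ℕ}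

lemma psi_inj (c : Fin n → ℂ) (hc1 : ∀ k : Fin n, (k:ℕ) = 0 → c k = 1) :
    Function.Injective (psi c) := by
  rw [injective_iff_map_eq_zero]
  intro x hx
  have claim : ∀ m : ℕ, ∀ k : Fin n, (k:ℕ) < m → x k = 0 := by
    intro m
    induction m with
    | zero => intro k hk; omega
    | succ m ih =>
      intro k hk
      rcases Nat.lt_or_ge (k:ℕ) m with h|h
      · exact ih k h
      · have hkm : (k:ℕ) = m := by omega
        have h0 : psi c x k = 0 := by rw [hx]; rfl
        rw [psi_apply, Finset.sum_apply] at h0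
        rw [Finset.sum_eq_single k] at h0
        · have hd : pw c ((k:ℕ)+1) k = 1 := pw_diag c hc1 (by omega) k rfl
          simpa [hd] using h0
        · intro b _ hb
          simp only [Pi.smul_apply, smul_eq_mul]
          rcases Nat.lt_or_ge (b:ℕ) (k:ℕ) with hbk|hbk
          · rw [ih b (by omega), zero_mul]
          · have hbk' : (k:ℕ) < (b:ℕ) := by
              rcases Nat.lt_or_ge (k:ℕ) (b:ℕ) with h'|h'
              · exact h'
              · exact absurd (Fin.ext (by omega)) hb
            rw [pw_lowZero c (by omega) k (by omega), mul_zero]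
        · simp
  funext k
  exact claim n k k.isLt

/-- the structure vector of `TP₁(α)`. -/
noncomputable def Avec (n : ℕ) (α : ℕ → ℂ) : Fin n → ℂ :=
  ∑ k ∈ Finset.Icc 1 n, α (k+2) • nfE n k

lemma Avec_apply (α : ℕ → ℂ) (j : Fin n) : Avec n α j = α ((j:ℕ)+3) := by
  rw [Avec, Finset.sum_apply]
  have key : ∀ k ∈ Finset.Icc 1 n, (α (k+2) • nfE n k) j
      = if (j:ℕ)+1 = k then α (k+2) else 0 := by
    intro k _
    simp only [Pi.smul_apply, nfE, smul_eq_mul, mul_ite, mul_one, mul_zero]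
  rw [Finset.sum_congr rfl key, Finset.sum_ite_eq (Finset.Icc 1 n) ((j:ℕ)+1) (fun k => α (k+2))]
  have hj := j.isLt
  rw [if_pos (by simp [Finset.mem_Icc])]

lemma nfMul_nfE_Avec (α : ℕ → ℂ) (h2 : α 2 = 0) {i : ℕ} (hi : 2 ≤ i) :
    nfMul n (nfE n i) (Avec n α) = ∑ t ∈ Finset.Icc i n, α (t + 2 - i) • nfE n t := by
  rw [Avec, nfMul_sum_right]
  have step1 : ∀ k ∈ Finset.Icc 1 n, nfMul n (nfE n i) (α (k+2) • nfE n k)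
      = α ((i+k) + 2 - i) • nfE n (i+k) := by
    intro k hk
    rw [Finset.mem_Icc] at hk
    rw [nfMul_smul_right, nfE_mul (by omega) (by omega)]
    congr 2
    omega
  rw [Finset.sum_congr rfl step1]
  -- reindex : sum over k ∈ Icc 1 n of g (i+k) = sum over t ∈ Icc (i+1) (i+n) of g t
  have step2 : ∑ k ∈ Finset.Icc 1 n, (fun t => α (t + 2 - i) • nfE n t) (i+k)
      = ∑ t ∈ Finset.Icc (i+1) (i+n), α (t + 2 - i) • nfE n t := by
    refine Finset.sum_nbij' (fun k => i + k) (fun t => t - i) ?_ ?_ ?_ ?_ ?_ <;>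
      intro a ha <;> simp_all [Finset.mem_Icc] <;> try omega
  rw [step2]
  -- drop the tail t > n
  rw [← Finset.sum_subset (Finset.Icc_subset_Icc le_rfl (by omega : n ≤ i + n))
    (fun t ht hts => ?_)]
  · -- now sum over Icc (i+1) n ; compare to Icc i n
    rw [← Finset.sum_subset (Finset.Icc_subset_Icc (by omega : i ≤ i+1) le_rfl)
      (fun t ht hts => ?_)]
    rw [Finset.mem_Icc] at ht
    rw [Finset.mem_Icc] at hts
    have : t = i := by omega
    rw [this, show i + 2 - i = 2 by omega, h2, zero_smul]
  · rw [Finset.mem_Icc] at ht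
    rw [Finset.mem_Icc] at hts
    rw [nfE_high (by omega), smul_zero]

lemma brTP1_eq (α : ℕ → ℂ) (h2 : α 2 = 0) (x y : Fin n → ℂ) :
    brTP1 n α x y = nfCoeff n x 1 • nfMul n y (Avec n α)
      - nfCoeff n y 1 • nfMul n x (Avec n α) := by
  rw [brTP1]
  have step1 : ∀ i ∈ Finset.Icc 2 n,
      (nfCoeff n x 1 * nfCoeff n y i - nfCoeff n x i * nfCoeff n y 1) •
        ∑ t ∈ Finset.Icc i n, α (t + 2 - i) • nfE n t
      = (nfCoeff n x 1 * nfCoeff n y i - nfCoeff n x i * nfCoeff n y 1) •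
        nfMul n (nfE n i) (Avec n α) := by
    intro i hi
    rw [Finset.mem_Icc] at hi
    rw [nfMul_nfE_Avec α h2 hi.1]
  rw [Finset.sum_congr rfl step1]
  have step2 : ∑ i ∈ Finset.Icc 2 n,
      (nfCoeff n x 1 * nfCoeff n y i - nfCoeff n x i * nfCoeff n y 1) •
        nfMul n (nfE n i) (Avec n α)
      = ∑ i ∈ Finset.Icc 1 n,
      (nfCoeff n x 1 * nfCoeff n y i - nfCoeff n x i * nfCoeff n y 1) •
        nfMul n (nfE n i) (Avec n α) := by
    refine Finset.sum_subset (Finset.Icc_subset_Icc (by omega) le_rfl) fun t ht hts => ?_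
    rw [Finset.mem_Icc] at ht
    rw [Finset.mem_Icc] at hts
    have : t = 1 := by omega
    rw [this, sub_self, zero_smul]
  rw [step2]
  have expand : ∀ z : Fin n → ℂ,
      nfMul n z (Avec n α) = ∑ i ∈ Finset.Icc 1 n, nfCoeff n z i • nfMul n (nfE n i) (Avec n α) := by
    intro z
    conv_lhs => rw [decomp' z]
    rw [nfMul_sum_left]
    exact Finset.sum_congr rfl fun i _ => by rw [nfMul_smul_left]
  rw [expand x, expand y, Finset.smul_sum, Finset.smul_sum, ← Finset.sum_sub_distrib]
  refine Finset.sum_congr rfl fun i _ => ?_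
  rw [smul_smul, smul_smul, sub_smul]
  ring_nf

end Stmt14

/-- for `n ≥ 5` and `α₃ ≠ 0`, `TP₁(0,α₃,…,αₙ)` is isomorphic to
`TP₁(0,α₃,0,…,0)`. -/
theorem stmt_14 (n : ℕ) (hn : 5 ≤ n) (α : ℕ → ℂ) (h2 : α 2 = 0) (h3 : α 3 ≠ 0) :
    TPIso n (brTP1 n α) (brTP1 n fun t => if t = 3 then α 3 else 0) := by
  have hn0 : 0 < n := by omega
  have hβ2 : (fun t => if t = 3 then α 3 else 0) 2 = 0 := by norm_num
  set c : Fin n → ℂ := (α 3)⁻¹ • Stmt14.Avec n α with hcdef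
  have hc1 : ∀ k : Fin n, (k:ℕ) = 0 → c k = 1 := by
    intro k hk
    show (α 3)⁻¹ * Stmt14.Avec n α k = 1
    rw [Stmt14.Avec_apply, hk]
    exact inv_mul_cancel₀ h3
  have hAc : Stmt14.Avec n α = α 3 • c := by
    rw [hcdef, smul_smul, mul_inv_cancel₀ h3, one_smul]
  have hAβ : Stmt14.Avec n (fun t => if t = 3 then α 3 else 0) = α 3 • nfE n 1 := by
    funext j
    rw [Stmt14.Avec_apply]
    by_cases h : (j:ℕ) = 0
    · have h' : (j:ℕ)+3 = 3 := by omega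
      have h'' : (j:ℕ)+1 = 1 := by omega
      simp [h', h'', nfE]
    · have h1 : ¬((j:ℕ)+3 = 3) := by omega
      have h2' : ¬((j:ℕ)+1 = 1) := by omega
      simp [h1, h2', nfE]
  have hinj : Function.Injective (Stmt14.psi c) := Stmt14.psi_inj c hc1
  have hbij : Function.Bijective (Stmt14.psi c) :=
    ⟨hinj, LinearMap.injective_iff_surjective.mp hinj⟩
  let Φ := LinearEquiv.ofBijective (Stmt14.psi c) hbij
  have hΦ : ∀ x, Φ x = Stmt14.psi c x := fun x => rfl
  have hmul : ∀ x y, Φ (nfMul n x y) = nfMul n (Φ x) (Φ y) := fun x y => Stmt14.psi_mul c x y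
  have hAim : Stmt14.psi c (Stmt14.Avec n (fun t => if t = 3 then α 3 else 0))
      = Stmt14.Avec n α := by
    rw [hAβ, map_smul, Stmt14.psi_nfE1 c hn0, ← hAc]
  have fwd : ∀ u v, Φ (brTP1 n (fun t => if t = 3 then α 3 else 0) u v)
      = brTP1 n α (Φ u) (Φ v) := by
    intro u v
    rw [hΦ, Stmt14.brTP1_eq _ hβ2 u v, map_sub, map_smul, map_smul,
      Stmt14.psi_mul, Stmt14.psi_mul, hAim, Stmt14.brTP1_eq α h2]
    rw [hΦ u, hΦ v, Stmt14.psi_coeff1 c hc1 hn0, Stmt14.psi_coeff1 c hc1 hn0]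
  refine ⟨Φ.symm, fun x y => ?_, fun x y => ?_⟩
  · apply Φ.injective
    rw [Φ.apply_symm_apply, hmul, Φ.apply_symm_apply, Φ.apply_symm_apply]
  · apply Φ.injective
    rw [Φ.apply_symm_apply, fwd, Φ.apply_symm_apply, Φ.apply_symm_apply]
end

section
/- Let n ≥ 5, let 4 ≤ s ≤ n, and let αₛ,…,αₙ ∈ ℂ with αₛ ≠ 0. Then the transposed 1-Poisson algebra TP₁(0,…,0,αₛ,…,αₙ) (with α₂ = … = α_{s−1} = 0) is isomorphic to TP₁(0,…,0,1ₛ,0,…,0), i.e., to the structure on μ₀ⁿ with [e₁,eᵢ] = e_{s+i−2} for 2 ≤ i ≤ n+2−s and all other basis brackets zero. -/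
open Finset

namespace Stmt15
open Polynomial

noncomputable def toP (n : ℕ) (x : Fin n → ℂ) : ℂ[X] :=
  ∑ k : Fin n, C (x k) * X ^ ((k : ℕ) + 1)

noncomputable def ofP (n : ℕ) (f : ℂ[X]) : Fin n → ℂ := fun k => f.coeff ((k : ℕ) + 1)

lemma toP_coeff (n : ℕ) (x : Fin n → ℂ) (m : ℕ) : (toP n x).coeff m = nfCoeff n x m := by
  simp only [toP, nfCoeff, finset_sum_coeff, coeff_C_mul, coeff_X_pow]
  refine Finset.sum_congr rfl fun k _ => ?_
  by_cases h : (k : ℕ) + 1 = m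
  · simp [h]
  · simp only [h, if_false]
    rw [if_neg (by omega), mul_zero]

lemma nfCoeff_zero (n : ℕ) (x : Fin n → ℂ) : nfCoeff n x 0 = 0 := by
  simp [nfCoeff]

lemma toP_coeff_zero (n : ℕ) (x : Fin n → ℂ) : (toP n x).coeff 0 = 0 := by
  rw [toP_coeff]; exact nfCoeff_zero n x

lemma X_dvd_toP (n : ℕ) (x : Fin n → ℂ) : X ∣ toP n x :=
  X_dvd_iff.mpr (toP_coeff_zero n x)

lemma nfCoeff_eq (n : ℕ) (x : Fin n → ℂ) {m : ℕ} (h1 : 1 ≤ m) (h2 : m ≤ n) :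
    nfCoeff n x m = x ⟨m - 1, by omega⟩ := by
  rw [nfCoeff]
  rw [Finset.sum_eq_single (⟨m - 1, by omega⟩ : Fin n)]
  · have hm : m - 1 + 1 = m := by omega
    simp [hm]
  · intro b _ hb
    have : (b : ℕ) + 1 ≠ m := by
      intro h; exact hb (Fin.ext (show (b : ℕ) = m - 1 by omega))
    simp [this]
  · intro h; exact absurd (Finset.mem_univ _) h

lemma ofP_toP (n : ℕ) (x : Fin n → ℂ) : ofP n (toP n x) = x := by
  funext k
  rw [ofP, toP_coeff, nfCoeff_eq n x (by omega) (by omega)]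
  congr 1


def Agree (n : ℕ) (f g : ℂ[X]) : Prop := ∀ k ≤ n, f.coeff k = g.coeff k

lemma agree_refl (n : ℕ) (f : ℂ[X]) : Agree n f f := fun _ _ => rfl

lemma agree_ofP (n : ℕ) {f g : ℂ[X]} (h : Agree n f g) : ofP n f = ofP n g := by
  funext k; exact h ((k : ℕ) + 1) (by omega)

lemma agree_mul (n : ℕ) {f f' g g' : ℂ[X]} (hf : Agree n f f') (hg : Agree n g g') :
    Agree n (f * g) (f' * g') := by
  intro k hk
  rw [coeff_mul, coeff_mul]
  refine Finset.sum_congr rfl fun uv huv => ?_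
  rw [Finset.HasAntidiagonal.mem_antidiagonal] at huv
  rw [hf uv.1 (by omega), hg uv.2 (by omega)]

lemma agree_sub (n : ℕ) {f f' g g' : ℂ[X]} (hf : Agree n f f') (hg : Agree n g g') :
    Agree n (f - g) (f' - g') := by
  intro k hk
  rw [coeff_sub, coeff_sub, hf k hk, hg k hk]

lemma agree_C_mul (n : ℕ) (c : ℂ) {f g : ℂ[X]} (h : Agree n f g) :
    Agree n (C c * f) (C c * g) := by
  intro k hk
  rw [coeff_C_mul, coeff_C_mul, h k hk]

lemma agree_tau (n : ℕ) {f : ℂ[X]} (hf : f.coeff 0 = 0) : Agree n (toP n (ofP n f)) f := by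
  intro k hk
  rw [toP_coeff]
  match k with
  | 0 => rw [nfCoeff_zero, hf]
  | (j+1) => rw [nfCoeff_eq n _ (by omega) hk]; rfl

lemma coeff_pow_lt {p : ℂ[X]} (hp : X ∣ p) {k m : ℕ} (hk : k < m) : (p ^ m).coeff k = 0 :=
  (Polynomial.X_pow_dvd_iff.mp (pow_dvd_pow_of_dvd hp m)) k hk

lemma coeff_pow_self {p : ℂ[X]} (hp : X ∣ p) (m : ℕ) : (p ^ m).coeff m = (p.coeff 1) ^ m := by
  obtain ⟨q, rfl⟩ := hp
  rw [mul_pow]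
  have h1 : ((X : ℂ[X]) * q).coeff 1 = q.coeff 0 := by
    simpa using Polynomial.coeff_X_mul q 0
  have h2 : ((X : ℂ[X]) ^ m * q ^ m).coeff m = (q ^ m).coeff 0 := by
    simpa using Polynomial.coeff_X_pow_mul (q ^ m) m 0
  rw [h1, h2, Polynomial.coeff_zero_eq_eval_zero, Polynomial.coeff_zero_eq_eval_zero, eval_pow]

lemma coeff_comp (f p : ℂ[X]) (k : ℕ) :
    (f.comp p).coeff k = ∑ j ∈ f.support, f.coeff j * (p ^ j).coeff k := by
  rw [Polynomial.comp_eq_sum_left, Polynomial.sum_def, finset_sum_coeff]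
  refine Finset.sum_congr rfl fun j _ => ?_
  rw [coeff_C_mul]

lemma agree_comp (n : ℕ) {p f g : ℂ[X]} (hp : X ∣ p) (h : Agree n f g) :
    Agree n (f.comp p) (g.comp p) := by
  intro k hk
  have key : ((f - g).comp p).coeff k = 0 := by
    rw [coeff_comp]
    refine Finset.sum_eq_zero fun j hj => ?_
    have hjn : n < j := by
      by_contra hle
      rw [Polynomial.mem_support_iff, coeff_sub] at hj
      exact hj (by rw [h j (by omega)]; ring)
    rw [coeff_pow_lt hp (by omega), mul_zero]
  rw [Polynomial.sub_comp, coeff_sub] at key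
  exact sub_eq_zero.mp key

lemma comp_coeff_zero {f p : ℂ[X]} (hf : f.coeff 0 = 0) (hp : X ∣ p) :
    (f.comp p).coeff 0 = 0 := by
  rw [Polynomial.coeff_zero_eq_eval_zero, Polynomial.eval_comp]
  have hp0 : p.eval 0 = 0 := by
    rw [← Polynomial.coeff_zero_eq_eval_zero]; exact X_dvd_iff.mp hp
  rw [hp0, ← Polynomial.coeff_zero_eq_eval_zero, hf]

lemma toP_comp (n : ℕ) (x : Fin n → ℂ) (p : ℂ[X]) :
    (toP n x).comp p = ∑ k : Fin n, C (x k) * p ^ ((k : ℕ) + 1) := by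
  rw [toP, Polynomial.comp, Polynomial.eval₂_finset_sum]
  refine Finset.sum_congr rfl fun k _ => ?_
  rw [eval₂_mul, eval₂_C, eval₂_X_pow]

lemma comp_coeff_one (n : ℕ) (hn : 1 ≤ n) (x : Fin n → ℂ) {p : ℂ[X]} (hp : X ∣ p) :
    ((toP n x).comp p).coeff 1 = nfCoeff n x 1 * p.coeff 1 := by
  rw [toP_comp, finset_sum_coeff]
  rw [Finset.sum_eq_single (⟨0, by omega⟩ : Fin n)]
  · rw [coeff_C_mul, nfCoeff_eq n x le_rfl hn]
    norm_num
  · intro b _ hb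
    have hb0 : 1 ≤ (b : ℕ) := by
      by_contra h
      exact hb (Fin.ext (show (b : ℕ) = 0 by omega))
    rw [coeff_C_mul, coeff_pow_lt hp (by omega), mul_zero]
  · intro h; exact absurd (Finset.mem_univ _) h


lemma nfMul_eq (n : ℕ) (x y : Fin n → ℂ) : nfMul n x y = ofP n (toP n x * toP n y) := by
  funext k
  simp only [nfMul, ofP, coeff_mul, toP_coeff, nfCoeff, Finset.sum_mul, Finset.mul_sum]
  refine Eq.symm ?_
  have e1 : (∑ uv ∈ Finset.HasAntidiagonal.antidiagonal ((k : ℕ) + 1), ∑ j : Fin n, ∑ i : Fin n,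
      (if (i : ℕ) + 1 = uv.1 then x i else 0) * (if (j : ℕ) + 1 = uv.2 then y j else 0))
      = ∑ i : Fin n, ∑ j : Fin n, ∑ uv ∈ Finset.HasAntidiagonal.antidiagonal ((k : ℕ) + 1),
      (if (i : ℕ) + 1 = uv.1 then x i else 0) * (if (j : ℕ) + 1 = uv.2 then y j else 0) :=
    (Finset.sum_comm.trans (Finset.sum_congr rfl fun _ _ => Finset.sum_comm)).trans
      Finset.sum_comm
  rw [e1]
  refine Finset.sum_congr rfl fun i _ => ?_
  refine Finset.sum_congr rfl fun j _ => ?_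
  by_cases h : (i : ℕ) + (j : ℕ) + 1 = (k : ℕ)
  · rw [if_pos h, Finset.sum_eq_single ((i : ℕ) + 1, (j : ℕ) + 1)]
    · simp
    · intro uv _ hne
      rcases eq_or_ne ((i : ℕ) + 1) uv.1 with h1 | h1
      · have h2 : (j : ℕ) + 1 ≠ uv.2 := fun h2 => hne (Prod.ext h1.symm h2.symm)
        rw [if_neg h2, mul_zero]
      · rw [if_neg h1, zero_mul]
    · intro hmem
      exact absurd (Finset.HasAntidiagonal.mem_antidiagonal.mpr (by omega)) hmem
  · rw [if_neg h]
    refine Finset.sum_eq_zero fun uv huv => ?_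
    rw [Finset.HasAntidiagonal.mem_antidiagonal] at huv
    rcases eq_or_ne ((i : ℕ) + 1) uv.1 with h1 | h1
    · have h2 : (j : ℕ) + 1 ≠ uv.2 := by intro h2; omega
      rw [if_neg h2, mul_zero]
    · rw [if_neg h1, zero_mul]

noncomputable def wpoly (s n : ℕ) (α : ℕ → ℂ) : ℂ[X] :=
  ∑ t ∈ Finset.Icc s n, C (α t) * X ^ (t - 2)

lemma wpoly_coeff (s n : ℕ) (hs : 4 ≤ s) (α : ℕ → ℂ) (b : ℕ) :
    (wpoly s n α).coeff b = if s ≤ b + 2 ∧ b + 2 ≤ n then α (b + 2) else 0 := by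
  rw [wpoly, finset_sum_coeff]
  by_cases h : s ≤ b + 2 ∧ b + 2 ≤ n
  · rw [if_pos h, Finset.sum_eq_single (b + 2)]
    · rw [coeff_C_mul, coeff_X_pow, if_pos (by omega), mul_one]
    · intro t ht hne
      rw [Finset.mem_Icc] at ht
      rw [coeff_C_mul, coeff_X_pow, if_neg (by omega), mul_zero]
    · intro hmem; exact absurd (Finset.mem_Icc.mpr (by omega)) hmem
  · rw [if_neg h]
    refine Finset.sum_eq_zero fun t ht => ?_
    rw [Finset.mem_Icc] at ht
    rw [coeff_C_mul, coeff_X_pow, if_neg (by omega), mul_zero]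

lemma brTP1_eq (n s : ℕ) (hs : 4 ≤ s) (hsn : s ≤ n) (α : ℕ → ℂ)
    (hα : ∀ t, 2 ≤ t → t < s → α t = 0) (x y : Fin n → ℂ) :
    brTP1 n α x y =
      ofP n ((C (nfCoeff n x 1) * toP n y - C (nfCoeff n y 1) * toP n x) * wpoly s n α) := by
  funext k
  have hk1 : (k : ℕ) + 1 ≤ n := by omega
  have hR : ofP n ((C (nfCoeff n x 1) * toP n y - C (nfCoeff n y 1) * toP n x) * wpoly s n α) k
      = ∑ a ∈ Finset.range ((k : ℕ) + 2),
          (nfCoeff n x 1 * nfCoeff n y a - nfCoeff n y 1 * nfCoeff n x a) *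
            (wpoly s n α).coeff ((k : ℕ) + 1 - a) := by
    show ((C (nfCoeff n x 1) * toP n y - C (nfCoeff n y 1) * toP n x) * wpoly s n α).coeff ((k:ℕ)+1) = _
    rw [coeff_mul, ← Finset.Nat.sum_antidiagonal_eq_sum_range_succ
      (fun a b => (nfCoeff n x 1 * nfCoeff n y a - nfCoeff n y 1 * nfCoeff n x a) *
        (wpoly s n α).coeff b)]
    refine Finset.sum_congr rfl fun uv _ => ?_
    rw [coeff_sub, coeff_C_mul, coeff_C_mul, toP_coeff, toP_coeff]
  have hL : brTP1 n α x y k = ∑ i ∈ Finset.Icc 2 n,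
      (nfCoeff n x 1 * nfCoeff n y i - nfCoeff n x i * nfCoeff n y 1) *
        (if i ≤ (k : ℕ) + 1 then α ((k : ℕ) + 3 - i) else 0) := by
    simp only [brTP1, Finset.sum_apply, Pi.smul_apply, smul_eq_mul, nfE]
    refine Finset.sum_congr rfl fun i hi => ?_
    rw [Finset.mem_Icc] at hi
    congr 1
    by_cases h : i ≤ (k : ℕ) + 1
    · rw [if_pos h, Finset.sum_eq_single ((k : ℕ) + 1)]
      · rw [if_pos rfl, mul_one]
      · intro t ht hne
        rw [if_neg (fun hh => hne hh.symm), mul_zero]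
      · intro hmem
        exact absurd (Finset.mem_Icc.mpr ⟨h, hk1⟩) hmem
    · rw [if_neg h]
      refine Finset.sum_eq_zero fun t ht => ?_
      rw [Finset.mem_Icc] at ht
      rw [if_neg (by omega), mul_zero]
  rw [hL, hR]
  have hsub1 : Finset.Icc 2 n ⊆ Finset.range (n + 1) := by
    intro i hi; rw [Finset.mem_Icc] at hi; rw [Finset.mem_range]; omega
  have hsub2 : Finset.range ((k : ℕ) + 2) ⊆ Finset.range (n + 1) := by
    intro a ha; rw [Finset.mem_range] at ha ⊢; omega
  rw [Finset.sum_subset hsub1, Finset.sum_subset hsub2]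
  · refine Finset.sum_congr rfl fun a ha => ?_
    rw [Finset.mem_range] at ha
    rcases Nat.lt_or_ge a 2 with h2 | h2
    · interval_cases a
      · rw [nfCoeff_zero, nfCoeff_zero]; ring
      · ring
    · by_cases hak : a ≤ (k : ℕ) + 1
      · rw [if_pos hak, wpoly_coeff s n hs]
        have e1 : (k : ℕ) + 1 - a + 2 = (k : ℕ) + 3 - a := by omega
        rw [e1]
        by_cases hsa : s ≤ (k : ℕ) + 3 - a
        · rw [if_pos ⟨hsa, by omega⟩]; ring
        · rw [if_neg (by tauto), hα ((k : ℕ) + 3 - a) (by omega) (by omega)]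
          ring
      · rw [if_neg hak, wpoly_coeff s n hs]
        have e1 : (k : ℕ) + 1 - a = 0 := by omega
        rw [e1, if_neg (by omega)]
        ring
  · intro a _ ha2
    rw [Finset.mem_range] at ha2
    rw [wpoly_coeff s n hs]
    have e1 : (k : ℕ) + 1 - a = 0 := by omega
    rw [e1, if_neg (by omega)]
    ring
  · intro i hi hi2
    rw [Finset.mem_range] at hi
    rw [Finset.mem_Icc] at hi2
    have h2 : i < 2 := by omega
    interval_cases i
    · rw [nfCoeff_zero, nfCoeff_zero]; ring
    · ring


lemma dvd_E1 {p q : ℂ[X]} (hp : X ∣ p) {j : ℕ} (hq : X ^ j ∣ q) (hj : 1 ≤ j) :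
    ∀ i : ℕ, (X : ℂ[X]) ^ (i + j) ∣ ((p + q) ^ (i + 1) - p ^ (i + 1)) := by
  intro i
  induction i with
  | zero => simpa using hq
  | succ i ih =>
    have hid : (p + q) ^ (i + 1 + 1) - p ^ (i + 1 + 1)
        = ((p + q) ^ (i + 1) - p ^ (i + 1)) * p + ((p + q) ^ (i + 1) - p ^ (i + 1)) * q
          + p ^ (i + 1) * q := by ring
    rw [hid]
    refine dvd_add (dvd_add ?_ ?_) ?_
    · rw [show i + 1 + j = (i + j) + 1 by omega, pow_succ]
      exact mul_dvd_mul ih hp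
    · refine dvd_trans (pow_dvd_pow X (show i + 1 + j ≤ (i + j) + j by omega)) ?_
      rw [pow_add]
      exact mul_dvd_mul ih hq
    · rw [pow_add]
      exact mul_dvd_mul (pow_dvd_pow_of_dvd hp (i + 1)) hq

lemma dvd_E2 {p q : ℂ[X]} (hp : X ∣ p) {j : ℕ} (hq : X ^ j ∣ q) (hj : 1 ≤ j) :
    ∀ i : ℕ, (X : ℂ[X]) ^ (i + (2 * j - 1)) ∣
      ((p + q) ^ (i + 1) - p ^ (i + 1) - ((i : ℂ[X]) + 1) * (p ^ i * q)) := by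
  intro i
  induction i with
  | zero =>
    have h : (p + q) ^ (0 + 1) - p ^ (0 + 1) - (((0 : ℕ) : ℂ[X]) + 1) * (p ^ 0 * q) = 0 := by
      push_cast
      ring
    rw [h]
    exact dvd_zero _
  | succ i ih =>
    have hid : (p + q) ^ (i + 1 + 1) - p ^ (i + 1 + 1) - (((i + 1 : ℕ) : ℂ[X]) + 1) * (p ^ (i + 1) * q)
        = ((p + q) ^ (i + 1) - p ^ (i + 1) - ((i : ℂ[X]) + 1) * (p ^ i * q)) * p
          + ((p + q) ^ (i + 1) - p ^ (i + 1)) * q := by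
      push_cast
      ring
    rw [hid]
    refine dvd_add ?_ ?_
    · rw [show i + 1 + (2 * j - 1) = (i + (2 * j - 1)) + 1 by omega, pow_succ]
      exact mul_dvd_mul ih hp
    · refine dvd_trans (pow_dvd_pow X (show i + 1 + (2 * j - 1) ≤ (i + j) + j by omega)) ?_
      rw [pow_add]
      exact mul_dvd_mul (dvd_E1 hp hq hj i) hq

lemma coeff_pow_add (s : ℕ) (hs : 4 ≤ s) {p q : ℂ[X]} (hp : X ∣ p) {j : ℕ} (hj : 2 ≤ j)
    (hq : X ^ j ∣ q) {m : ℕ} (hm : s - 2 ≤ m) {k : ℕ} (hk : k ≤ s - 3 + j) :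
    ((p + q) ^ m).coeff k = (p ^ m).coeff k +
      (if m = s - 2 ∧ k = s - 3 + j then
        (((s - 3 : ℕ) : ℂ) + 1) * (p.coeff 1) ^ (s - 3) * q.coeff j else 0) := by
  have hm1 : m = (m - 1) + 1 := by omega
  have hd2 := dvd_E2 hp hq (by omega) (m - 1)
  rw [← hm1] at hd2
  have hcD : ((p + q) ^ m - p ^ m - (((m - 1 : ℕ) : ℂ[X]) + 1) * (p ^ (m - 1) * q)).coeff k = 0 := by
    refine Polynomial.X_pow_dvd_iff.mp hd2 k ?_
    omega
  rw [coeff_sub, coeff_sub, sub_eq_zero, sub_eq_iff_eq_add'] at hcD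
  rw [hcD]
  congr 1
  have hC : (((m - 1 : ℕ) : ℂ[X]) + 1) = C (((m - 1 : ℕ) : ℂ) + 1) := by
    rw [map_add, map_one, Polynomial.C_eq_natCast]
  rw [hC, coeff_C_mul, coeff_mul]
  by_cases hcase : m = s - 2 ∧ k = s - 3 + j
  · obtain ⟨hms, hks⟩ := hcase
    rw [if_pos ⟨hms, hks⟩]
    rw [Finset.sum_eq_single (s - 3, j)]
    · have : (p ^ (m - 1)).coeff (s - 3) = (p.coeff 1) ^ (s - 3) := by
        rw [show m - 1 = s - 3 by omega]
        exact coeff_pow_self hp (s - 3)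
      rw [this, hms]
      push_cast [show s - 2 - 1 = s - 3 by omega]
      ring
    · intro uv huv hne
      rw [Finset.HasAntidiagonal.mem_antidiagonal] at huv
      rcases Nat.lt_or_ge uv.1 (s - 3) with h1 | h1
      · rw [coeff_pow_lt hp (by omega), zero_mul]
      · have h2 : uv.2 < j := by
          rcases Nat.lt_or_ge uv.2 j with h | h
          · exact h
          · exfalso; apply hne
            have e1 : uv.1 = s - 3 := by omega
            have e2 : uv.2 = j := by omega
            exact Prod.ext e1 e2
        rw [Polynomial.X_pow_dvd_iff.mp hq uv.2 h2, mul_zero]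
    · intro hmem
      exact absurd (Finset.HasAntidiagonal.mem_antidiagonal.mpr (by omega)) hmem
  · rw [if_neg hcase]
    rw [Finset.sum_eq_zero, mul_zero]
    intro uv huv
    rw [Finset.HasAntidiagonal.mem_antidiagonal] at huv
    rcases Nat.lt_or_ge uv.1 (m - 1) with h1 | h1
    · rw [coeff_pow_lt hp h1, zero_mul]
    · have h2 : uv.2 < j := by omega
      rw [Polynomial.X_pow_dvd_iff.mp hq uv.2 h2, mul_zero]

lemma wcomp (n s : ℕ) (α : ℕ → ℂ) (r : ℂ[X]) :
    (wpoly s n α).comp r = ∑ t ∈ Finset.Icc s n, C (α t) * r ^ (t - 2) := by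
  rw [wpoly, Polynomial.comp, Polynomial.eval₂_finset_sum]
  exact Finset.sum_congr rfl fun t _ => by rw [eval₂_mul, eval₂_C, eval₂_X_pow]

lemma key (n s : ℕ) (hs : 4 ≤ s) (hsn : s ≤ n) (α : ℕ → ℂ) {p q : ℂ[X]} (hp : X ∣ p)
    {j : ℕ} (hj : 2 ≤ j) (hq : X ^ j ∣ q) {k : ℕ} (hk : k ≤ s - 3 + j) :
    ((wpoly s n α).comp (p + q)).coeff k = ((wpoly s n α).comp p).coeff k +
      (if k = s - 3 + j then
        (((s - 3 : ℕ) : ℂ) + 1) * α s * (p.coeff 1) ^ (s - 3) * q.coeff j else 0) := by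
  rw [wcomp, wcomp, finset_sum_coeff, finset_sum_coeff]
  have hterm : ∀ t ∈ Finset.Icc s n, (C (α t) * (p + q) ^ (t - 2)).coeff k
      = (C (α t) * p ^ (t - 2)).coeff k +
        (if t = s ∧ k = s - 3 + j then
          (((s - 3 : ℕ) : ℂ) + 1) * α s * (p.coeff 1) ^ (s - 3) * q.coeff j else 0) := by
    intro t ht
    rw [Finset.mem_Icc] at ht
    rw [coeff_C_mul, coeff_C_mul, coeff_pow_add s hs hp hj hq (by omega) hk, mul_add]
    congr 1
    by_cases hcase : t = s ∧ k = s - 3 + j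
    · rw [if_pos ⟨by omega, hcase.2⟩, if_pos hcase, hcase.1]
      ring
    · have : ¬(t - 2 = s - 2 ∧ k = s - 3 + j) := by
        intro h; exact hcase ⟨by omega, h.2⟩
      rw [if_neg this, if_neg hcase, mul_zero]
  rw [Finset.sum_congr rfl hterm, Finset.sum_add_distrib]
  congr 1
  by_cases hcase : k = s - 3 + j
  · rw [if_pos hcase, Finset.sum_eq_single s]
    · rw [if_pos ⟨rfl, hcase⟩]
    · intro t _ hne
      rw [if_neg (fun h => hne h.1)]
    · intro hmem
      exact absurd (Finset.mem_Icc.mpr ⟨le_rfl, hsn⟩) hmem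
  · rw [if_neg hcase]
    exact Finset.sum_eq_zero fun t _ => if_neg (fun h => hcase h.2)

lemma exists_p (n s : ℕ) (hn : 5 ≤ n) (hs : 4 ≤ s) (hsn : s ≤ n) (α : ℕ → ℂ)
    (hα : α s ≠ 0) :
    ∃ (p : ℂ[X]) (c : ℂ), c ≠ 0 ∧ X ∣ p ∧ p.coeff 1 = c ∧
      ∀ k ≤ n - 2, ((wpoly s n α).comp p).coeff k = if k = s - 2 then c else 0 := by
  obtain ⟨c, hc⟩ := IsAlgClosed.exists_pow_nat_eq (α s)⁻¹ (n := s - 3) (by omega)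
  have hcne : c ≠ 0 := by
    intro h
    rw [h, zero_pow (by omega)] at hc
    exact inv_ne_zero hα hc.symm
  have hkey : α s * c ^ (s - 3) = 1 := by
    rw [hc, mul_inv_cancel₀ hα]
  -- the inductive predicate
  have base : ∃ p : ℂ[X], X ∣ p ∧ p.coeff 1 = c ∧
      ∀ k < s - 1, ((wpoly s n α).comp p).coeff k = if k = s - 2 then c else 0 := by
    refine ⟨C c * X, ⟨C c, mul_comm _ _⟩, by simp, ?_⟩
    intro k hk
    rw [wcomp, finset_sum_coeff]
    have hterm : ∀ t ∈ Finset.Icc s n, (C (α t) * (C c * X) ^ (t - 2)).coeff k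
        = if k = t - 2 then α t * c ^ (t - 2) else 0 := by
      intro t _
      rw [mul_pow, ← map_pow, ← mul_assoc, ← map_mul, coeff_C_mul, coeff_X_pow]
      split_ifs <;> simp
    rw [Finset.sum_congr rfl hterm]
    by_cases hks : k = s - 2
    · rw [if_pos hks, Finset.sum_eq_single s]
      · rw [if_pos (by omega)]
        rw [show s - 2 = (s - 3) + 1 by omega, pow_succ, ← mul_assoc, hkey, one_mul]
      · intro t ht hne
        rw [Finset.mem_Icc] at ht
        rw [if_neg (by omega)]
      · intro hmem
        exact absurd (Finset.mem_Icc.mpr ⟨le_rfl, hsn⟩) hmem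
    · rw [if_neg hks]
      refine Finset.sum_eq_zero fun t ht => ?_
      rw [Finset.mem_Icc] at ht
      rw [if_neg (by omega)]
  have step : ∀ d, s - 1 ≤ d → d ≤ n - 2 →
      (∃ p : ℂ[X], X ∣ p ∧ p.coeff 1 = c ∧
        ∀ k < d, ((wpoly s n α).comp p).coeff k = if k = s - 2 then c else 0) →
      (∃ p : ℂ[X], X ∣ p ∧ p.coeff 1 = c ∧
        ∀ k < d + 1, ((wpoly s n α).comp p).coeff k = if k = s - 2 then c else 0) := by
    intro d hd1 hd2 ⟨p, hpdvd, hp1, hprev⟩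
    have hj2 : 2 ≤ d + 3 - s := by omega
    obtain ⟨t, htdef⟩ : ∃ t : ℂ, t = -(((wpoly s n α).comp p).coeff d) /
        ((((s - 3 : ℕ) : ℂ) + 1) * α s * c ^ (s - 3)) := ⟨_, rfl⟩
    have hqdvd : X ^ (d + 3 - s) ∣ (C t * X ^ (d + 3 - s) : ℂ[X]) := ⟨C t, mul_comm _ _⟩
    have hqj : (C t * X ^ (d + 3 - s) : ℂ[X]).coeff (d + 3 - s) = t := by
      rw [coeff_C_mul, coeff_X_pow, if_pos rfl, mul_one]
    have hden : (((s - 3 : ℕ) : ℂ) + 1) * α s * c ^ (s - 3) ≠ 0 := by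
      have h1 : (((s - 3 : ℕ) : ℂ) + 1) ≠ 0 := by
        have := Nat.cast_add_one_ne_zero (R := ℂ) (s - 3)
        simpa using this
      have h2 : c ^ (s - 3) ≠ 0 := pow_ne_zero _ hcne
      exact mul_ne_zero (mul_ne_zero h1 hα) h2
    refine ⟨p + C t * X ^ (d + 3 - s), ?_, ?_, ?_⟩
    · exact dvd_add hpdvd
        (dvd_trans (dvd_pow_self X (by omega : d + 3 - s ≠ 0)) hqdvd)
    · rw [coeff_add, hp1, coeff_C_mul, coeff_X_pow, if_neg (by omega), mul_zero, add_zero]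
    · intro k hk
      rw [key n s hs hsn α hpdvd hj2 hqdvd (show k ≤ s - 3 + (d + 3 - s) by omega)]
      rcases Nat.lt_or_ge k d with hkd | hkd
      · have hne : ¬ k = s - 3 + (d + 3 - s) := by omega
        rw [hprev k hkd, if_neg hne, add_zero]
      · have hkeq : k = d := by omega
        subst hkeq
        rw [if_pos (show k = s - 3 + (k + 3 - s) by omega), hp1, hqj,
          if_neg (by omega : ¬ k = s - 2)]
        have hA : t * ((((s - 3 : ℕ) : ℂ) + 1) * α s * c ^ (s - 3)) =
            -(((wpoly s n α).comp p).coeff k) := by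
          rw [htdef]
          exact div_mul_cancel₀ _ hden
        linear_combination hA
  have main : ∀ d, s - 1 ≤ d → d ≤ n - 1 →
      ∃ p : ℂ[X], X ∣ p ∧ p.coeff 1 = c ∧
        ∀ k < d, ((wpoly s n α).comp p).coeff k = if k = s - 2 then c else 0 := by
    intro d hd
    induction d, hd using Nat.le_induction with
    | base => intro _; exact base
    | succ d hd ih => intro hdn; exact step d hd (by omega) (ih (by omega))
  obtain ⟨p, h1, h2, h3⟩ := main (n - 1) (by omega) le_rfl
  exact ⟨p, c, hcne, h1, h2, fun k hk => h3 k (by omega)⟩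


noncomputable def phiL (n : ℕ) (p : ℂ[X]) : (Fin n → ℂ) →ₗ[ℂ] (Fin n → ℂ) where
  toFun x := ofP n ((toP n x).comp p)
  map_add' x y := by
    have h1 : toP n (x + y) = toP n x + toP n y := by
      rw [toP, toP, toP, ← Finset.sum_add_distrib]
      refine Finset.sum_congr rfl fun k _ => ?_
      rw [Pi.add_apply, map_add, add_mul]
    funext k
    show ((toP n (x + y)).comp p).coeff ((k : ℕ) + 1)
      = ((toP n x).comp p).coeff ((k : ℕ) + 1) + ((toP n y).comp p).coeff ((k : ℕ) + 1)
    rw [h1, Polynomial.add_comp, coeff_add]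
  map_smul' c x := by
    have h1 : toP n (c • x) = C c * toP n x := by
      rw [toP, toP, Finset.mul_sum]
      refine Finset.sum_congr rfl fun k _ => ?_
      rw [Pi.smul_apply, smul_eq_mul, map_mul, mul_assoc]
    funext k
    show ((toP n (c • x)).comp p).coeff ((k : ℕ) + 1)
      = c * ((toP n x).comp p).coeff ((k : ℕ) + 1)
    rw [h1, Polynomial.C_mul_comp, coeff_C_mul]

lemma phi_apply (n : ℕ) (p : ℂ[X]) (x : Fin n → ℂ) :
    phiL n p x = ofP n ((toP n x).comp p) := rfl

lemma phi_inj (n : ℕ) {p : ℂ[X]} (hp : X ∣ p) (hp1 : p.coeff 1 ≠ 0) :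
    Function.Injective (phiL n p) := by
  rw [injective_iff_map_eq_zero]
  intro x hx
  have H : ∀ m : ℕ, ∀ k : Fin n, (k : ℕ) < m → x k = 0 := by
    intro m
    induction m with
    | zero => intro k hk; omega
    | succ m ih =>
      intro k hk
      rcases Nat.lt_or_ge (k : ℕ) m with h | h
      · exact ih k h
      · have hc : ((toP n x).comp p).coeff ((k : ℕ) + 1) = 0 := by
          have := congrFun hx k
          rw [phi_apply] at this
          exact this
        rw [toP_comp, finset_sum_coeff, Finset.sum_eq_single k] at hc
        · rw [coeff_C_mul, coeff_pow_self hp] at hc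
          rcases mul_eq_zero.mp hc with h' | h'
          · exact h'
          · exact absurd h' (pow_ne_zero _ hp1)
        · intro b _ hb
          rcases Nat.lt_or_ge (b : ℕ) (k : ℕ) with hlt | hge
          · rw [ih b (by omega), map_zero, zero_mul, Polynomial.coeff_zero]
          · have hgt : (k : ℕ) < (b : ℕ) := by
              rcases Nat.lt_or_ge (k : ℕ) (b : ℕ) with h' | h'
              · exact h'
              · exact absurd (Fin.ext (by omega : (b : ℕ) = (k : ℕ))) hb
            rw [coeff_C_mul, coeff_pow_lt hp (by omega), mul_zero]
        · intro hmem; exact absurd (Finset.mem_univ _) hmem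
  funext k
  exact H n k k.2

lemma phi_mul (n : ℕ) {p : ℂ[X]} (hp : X ∣ p) (x y : Fin n → ℂ) :
    phiL n p (nfMul n x y) = nfMul n (phiL n p x) (phiL n p y) := by
  have h1 : phiL n p (nfMul n x y) = ofP n (((toP n x).comp p) * ((toP n y).comp p)) := by
    rw [phi_apply, nfMul_eq, ← Polynomial.mul_comp]
    refine agree_ofP n (agree_comp n hp (agree_tau n ?_))
    rw [Polynomial.mul_coeff_zero, toP_coeff_zero, zero_mul]
  rw [h1, nfMul_eq]
  refine (agree_ofP n ?_).symm
  exact agree_mul n (agree_tau n (comp_coeff_zero (toP_coeff_zero n x) hp))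
    (agree_tau n (comp_coeff_zero (toP_coeff_zero n y) hp))

lemma gap (n s : ℕ) (hs : 4 ≤ s) (hn : 5 ≤ n) {D wc : ℂ[X]} (a : ℂ)
    (hD0 : D.coeff 0 = 0) (hD1 : D.coeff 1 = 0)
    (hwc : ∀ v ≤ n - 2, wc.coeff v = if v = s - 2 then a else 0) :
    Agree n (D * wc) (D * (C a * X ^ (s - 2))) := by
  intro k hk
  rw [coeff_mul, coeff_mul]
  refine Finset.sum_congr rfl fun uv huv => ?_
  rw [Finset.HasAntidiagonal.mem_antidiagonal] at huv
  rcases Nat.lt_or_ge uv.1 2 with h1 | h1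
  · have : uv.1 = 0 ∨ uv.1 = 1 := by omega
    rcases this with h | h
    · rw [h, hD0, zero_mul, zero_mul]
    · rw [h, hD1, zero_mul, zero_mul]
  · congr 1
    rw [hwc uv.2 (by omega), coeff_C_mul, coeff_X_pow]
    split_ifs <;> simp

lemma phi_br (n s : ℕ) (hn : 5 ≤ n) (hs : 4 ≤ s) (hsn : s ≤ n) (α : ℕ → ℂ)
    (h0 : ∀ t, 2 ≤ t → t < s → α t = 0) {p : ℂ[X]} (hp : X ∣ p)
    (hw : ∀ k ≤ n - 2, ((wpoly s n α).comp p).coeff k = if k = s - 2 then p.coeff 1 else 0)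
    (x y : Fin n → ℂ) :
    phiL n p (brTP1 n α x y)
      = brTP1 n (fun t => if t = s then (1 : ℂ) else 0) (phiL n p x) (phiL n p y) := by
  set a : ℂ := p.coeff 1 with ha
  set F : ℂ[X] := (toP n y).comp p with hF
  set G : ℂ[X] := (toP n x).comp p with hG
  set lx : ℂ := nfCoeff n x 1 with hlx
  set ly : ℂ := nfCoeff n y 1 with hly
  have hF0 : F.coeff 0 = 0 := comp_coeff_zero (toP_coeff_zero n y) hp
  have hG0 : G.coeff 0 = 0 := comp_coeff_zero (toP_coeff_zero n x) hp
  have hF1 : F.coeff 1 = ly * a := comp_coeff_one n (by omega) y hp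
  have hG1 : G.coeff 1 = lx * a := comp_coeff_one n (by omega) x hp
  -- LHS
  have hL : phiL n p (brTP1 n α x y)
      = ofP n ((C lx * F - C ly * G) * ((wpoly s n α).comp p)) := by
    rw [phi_apply, brTP1_eq n s hs hsn α h0]
    have h2 : Agree n (toP n (ofP n ((C lx * toP n y - C ly * toP n x) * wpoly s n α)))
        ((C lx * toP n y - C ly * toP n x) * wpoly s n α) := by
      refine agree_tau n ?_
      rw [Polynomial.mul_coeff_zero, coeff_sub, coeff_C_mul, coeff_C_mul,
        toP_coeff_zero, toP_coeff_zero, mul_zero, mul_zero, sub_zero, zero_mul]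
    have h3 := agree_ofP n (agree_comp n hp h2)
    rw [h3, Polynomial.mul_comp, Polynomial.sub_comp, Polynomial.C_mul_comp,
      Polynomial.C_mul_comp]
  -- RHS
  have hb' : ∀ t, 2 ≤ t → t < s → (if t = s then (1 : ℂ) else 0) = 0 :=
    fun t _ ht => if_neg (by omega)
  have hwd : wpoly s n (fun t => if t = s then (1 : ℂ) else 0) = X ^ (s - 2) := by
    rw [wpoly, Finset.sum_eq_single s]
    · rw [if_pos rfl, map_one, one_mul]
    · intro t _ hne; rw [if_neg hne, map_zero, zero_mul]
    · intro hmem; exact absurd (Finset.mem_Icc.mpr ⟨le_rfl, hsn⟩) hmem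
  have hc1x : nfCoeff n (phiL n p x) 1 = lx * a := by
    have e : nfCoeff n (phiL n p x) 1 = G.coeff 1 := by
      rw [← toP_coeff]
      exact (agree_tau n hG0) 1 (by omega)
    rw [e, hG1]
  have hc1y : nfCoeff n (phiL n p y) 1 = ly * a := by
    have e : nfCoeff n (phiL n p y) 1 = F.coeff 1 := by
      rw [← toP_coeff]
      exact (agree_tau n hF0) 1 (by omega)
    rw [e, hF1]
  rw [hL, brTP1_eq n s hs hsn _ hb', hwd, hc1x, hc1y]
  -- Agree chain
  have hτF : Agree n (toP n (phiL n p y)) F := agree_tau n hF0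
  have hτG : Agree n (toP n (phiL n p x)) G := agree_tau n hG0
  have A4 : Agree n ((C (lx * a) * toP n (phiL n p y) - C (ly * a) * toP n (phiL n p x))
      * X ^ (s - 2)) ((C (lx * a) * F - C (ly * a) * G) * X ^ (s - 2)) :=
    agree_mul n (agree_sub n (agree_C_mul n _ hτF) (agree_C_mul n _ hτG)) (agree_refl n _)
  have hD0 : (C lx * F - C ly * G).coeff 0 = 0 := by
    rw [coeff_sub, coeff_C_mul, coeff_C_mul, hF0, hG0, mul_zero, mul_zero, sub_zero]
  have hD1 : (C lx * F - C ly * G).coeff 1 = 0 := by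
    rw [coeff_sub, coeff_C_mul, coeff_C_mul, hF1, hG1]
    ring
  have t1 : Agree n ((C lx * F - C ly * G) * ((wpoly s n α).comp p))
      ((C lx * F - C ly * G) * (C a * X ^ (s - 2))) :=
    gap n s hs hn a hD0 hD1 hw
  have hE : (C (lx * a) * F - C (ly * a) * G) * X ^ (s - 2)
      = (C lx * F - C ly * G) * (C a * X ^ (s - 2)) := by
    rw [map_mul, map_mul]
    ring
  refine agree_ofP n fun k hk => ?_
  rw [t1 k hk, ← hE]
  exact (A4 k hk).symm


end Stmt15

/-- for `n ≥ 5`, `4 ≤ s ≤ n`, `α₂ = … = α_{s-1} = 0` and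
`αₛ ≠ 0`, `TP₁(0,…,0,αₛ,…,αₙ)` is isomorphic to `TP₁(0,…,0,1ₛ,0,…,0)`. -/

theorem stmt_15 (n : ℕ) (hn : 5 ≤ n) (s : ℕ) (hs1 : 4 ≤ s) (hs2 : s ≤ n)
    (α : ℕ → ℂ) (h0 : ∀ t, 2 ≤ t → t < s → α t = 0) (hs : α s ≠ 0) :
    TPIso n (brTP1 n α) (brTP1 n fun t => if t = s then 1 else 0) := by
  obtain ⟨p, c, hcne, hpdvd, hp1, hw⟩ := Stmt15.exists_p n s hn hs1 hs2 α hs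
  have hp1ne : p.coeff 1 ≠ 0 := by rw [hp1]; exact hcne
  have hinj := Stmt15.phi_inj n hpdvd hp1ne
  have hsurj := LinearMap.injective_iff_surjective.mp hinj
  refine ⟨LinearEquiv.ofBijective (Stmt15.phiL n p) ⟨hinj, hsurj⟩, fun x y => ?_, fun x y => ?_⟩
  · exact Stmt15.phi_mul n hpdvd x y
  · have hw' : ∀ k ≤ n - 2, ((Stmt15.wpoly s n α).comp p).coeff k
        = if k = s - 2 then p.coeff 1 else 0 := by
      intro k hk; rw [hp1]; exact hw k hk
    exact Stmt15.phi_br n s hn hs1 hs2 α h0 hpdvd hw' x y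
end
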